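/- arXiv:1205.3676 — 10 statements merged into one kernel-verified Lean document; each statement's English description precedes it below -/
import Mathlib

section
/- Let D = (V ∪ {v_new}, E ∪ E_new) be the digraph obtained from a nonempty, nontrivial (r,s)-robust digraph D = (V, E) by adding one new vertex v_new together with a set E_new of directed edges incident to v_new. If v_new has at least r + s − 1 in-neighbors in D' (i.e., its in-degree satisfies d_{v_new} ≥ r + s − 1), then D' is (r,s)-robust. -/
/-- The in-neighbors of node `i` in the digraph with edge set `E`:
`V_i = {j : (j, i) ∈ E}`. -/
def inNbrs {V : Type*} [Fintype V] [DecidableEq V] (E : Finset (V × V)) (i : V) : Finset V :=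
  Finset.univ.filter (fun j => (j, i) ∈ E)

/-- `X_S = {i ∈ S : |V_i \ S| ≥ r}`, the set of nodes of `S` with at least `r`
in-neighbors outside of `S`. -/
def reachSet {V : Type*} [Fintype V] [DecidableEq V] (E : Finset (V × V)) (r : ℕ)
    (S : Finset V) : Finset V :=
  S.filter (fun i => r ≤ ((inNbrs E i) \ S).card)

/-- `(r,s)`-robustness of the digraph with edge set `E`. -/
def RSRobust {V : Type*} [Fintype V] [DecidableEq V] (E : Finset (V × V)) (r s : ℕ) : Prop :=
  ∀ S1 S2 : Finset V, S1.Nonempty → S2.Nonempty → Disjoint S1 S2 →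
    (reachSet E r S1).card = S1.card ∨ (reachSet E r S2).card = S2.card ∨
    s ≤ (reachSet E r S1).card + (reachSet E r S2).card

namespace AuxRobust

variable {n : ℕ}

/-- Projection of a subset of `Fin (n+1)` to `Fin n`. -/
def down (T : Finset (Fin (n + 1))) : Finset (Fin n) :=
  Finset.univ.filter (fun j => Fin.castSucc j ∈ T)

lemma mem_down {T : Finset (Fin (n + 1))} {j : Fin n} :
    j ∈ down T ↔ Fin.castSucc j ∈ T := by simp [down]

lemma image_down (T : Finset (Fin (n + 1))) :
    Finset.image Fin.castSucc (down T) = T.erase (Fin.last n) := by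
  ext x
  simp only [Finset.mem_image, Finset.mem_erase]
  constructor
  · rintro ⟨j, hj, rfl⟩
    exact ⟨(Fin.castSucc_lt_last j).ne, mem_down.mp hj⟩
  · rintro ⟨hx, hxT⟩
    rcases Fin.eq_castSucc_or_eq_last x with ⟨j, rfl⟩ | rfl
    · exact ⟨j, mem_down.mpr hxT, rfl⟩
    · exact absurd rfl hx

lemma card_down (T : Finset (Fin (n + 1))) :
    (down T).card = (T.erase (Fin.last n)).card := by
  rw [← image_down, Finset.card_image_of_injective _ (Fin.castSucc_injective n)]

lemma card_lift (E : Finset (Fin n × Fin n)) (E' : Finset (Fin (n + 1) × Fin (n + 1)))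
    (hrestr : ∀ i j : Fin n, (Fin.castSucc i, Fin.castSucc j) ∈ E' ↔ (i, j) ∈ E)
    (j : Fin n) (T : Finset (Fin (n + 1))) :
    ((inNbrs E j) \ down T).card ≤ ((inNbrs E' (Fin.castSucc j)) \ T).card := by
  have hsub : Finset.image Fin.castSucc ((inNbrs E j) \ down T) ⊆
      (inNbrs E' (Fin.castSucc j)) \ T := by
    intro x hx
    simp only [Finset.mem_image] at hx
    obtain ⟨k, hk, rfl⟩ := hx
    rw [Finset.mem_sdiff] at hk ⊢
    refine ⟨?_, fun h => hk.2 (mem_down.mpr h)⟩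
    have := hk.1
    simp only [inNbrs, Finset.mem_filter, Finset.mem_univ, true_and] at this ⊢
    exact (hrestr k j).mpr this
  calc ((inNbrs E j) \ down T).card
      = (Finset.image Fin.castSucc ((inNbrs E j) \ down T)).card :=
        (Finset.card_image_of_injective _ (Fin.castSucc_injective n)).symm
    _ ≤ _ := Finset.card_le_card hsub

lemma reach_lift (E : Finset (Fin n × Fin n)) (E' : Finset (Fin (n + 1) × Fin (n + 1)))
    (hrestr : ∀ i j : Fin n, (Fin.castSucc i, Fin.castSucc j) ∈ E' ↔ (i, j) ∈ E)
    (r : ℕ) (T : Finset (Fin (n + 1))) :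
    Finset.image Fin.castSucc (reachSet E r (down T)) ⊆ reachSet E' r T := by
  intro x hx
  obtain ⟨j, hj, rfl⟩ := Finset.mem_image.mp hx
  rw [reachSet, Finset.mem_filter] at hj ⊢
  exact ⟨mem_down.mp hj.1, hj.2.trans (card_lift E E' hrestr j T)⟩

lemma card_reach_lift (E : Finset (Fin n × Fin n)) (E' : Finset (Fin (n + 1) × Fin (n + 1)))
    (hrestr : ∀ i j : Fin n, (Fin.castSucc i, Fin.castSucc j) ∈ E' ↔ (i, j) ∈ E)
    (r : ℕ) (T : Finset (Fin (n + 1))) :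
    (reachSet E r (down T)).card ≤ (reachSet E' r T).card := by
  calc (reachSet E r (down T)).card
      = (Finset.image Fin.castSucc (reachSet E r (down T))).card :=
        (Finset.card_image_of_injective _ (Fin.castSucc_injective n)).symm
    _ ≤ _ := Finset.card_le_card (reach_lift E E' hrestr r T)

lemma full_lift (E : Finset (Fin n × Fin n)) (E' : Finset (Fin (n + 1) × Fin (n + 1)))
    (hrestr : ∀ i j : Fin n, (Fin.castSucc i, Fin.castSucc j) ∈ E' ↔ (i, j) ∈ E)
    (r : ℕ) (T : Finset (Fin (n + 1))) (hlT : Fin.last n ∉ T)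
    (hfull : (reachSet E r (down T)).card = (down T).card) :
    (reachSet E' r T).card = T.card := by
  have hle : (reachSet E' r T).card ≤ T.card :=
    Finset.card_le_card (Finset.filter_subset _ _)
  have hcd : (down T).card = T.card := by
    rw [card_down, Finset.erase_eq_of_notMem hlT]
  have hge := card_reach_lift E E' hrestr r T
  omega

lemma down_nonempty {T : Finset (Fin (n + 1))} (hT : T.Nonempty) (hlT : Fin.last n ∉ T) :
    (down T).Nonempty := by
  rw [← Finset.card_pos, card_down, Finset.erase_eq_of_notMem hlT, Finset.card_pos]
  exact hT

lemma down_disjoint {S1 S2 : Finset (Fin (n + 1))} (hd : Disjoint S1 S2) :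
    Disjoint (down S1) (down S2) := by
  rw [Finset.disjoint_left] at hd ⊢
  intro j h1 h2
  exact hd (mem_down.mp h1) (mem_down.mp h2)

/-- The key case: `Fin.last n ∈ S1`. -/
lemma main_case (r s : ℕ) (hs1 : 1 ≤ s)
    (E : Finset (Fin n × Fin n))
    (E' : Finset (Fin (n + 1) × Fin (n + 1))) (hE'simple : ∀ i : Fin (n + 1), (i, i) ∉ E')
    (hrestr : ∀ i j : Fin n, (Fin.castSucc i, Fin.castSucc j) ∈ E' ↔ (i, j) ∈ E)
    (hrob : RSRobust E r s)
    (hdeg : r + s - 1 ≤ (inNbrs E' (Fin.last n)).card)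
    (S1 S2 : Finset (Fin (n + 1))) (h1 : S1.Nonempty) (h2 : S2.Nonempty)
    (hd : Disjoint S1 S2) (hl : Fin.last n ∈ S1) :
    (reachSet E' r S1).card = S1.card ∨ (reachSet E' r S2).card = S2.card ∨
      s ≤ (reachSet E' r S1).card + (reachSet E' r S2).card := by
  have hl2 : Fin.last n ∉ S2 := fun h => (Finset.disjoint_left.mp hd hl) h
  have hlastnbr : Fin.last n ∉ inNbrs E' (Fin.last n) := by
    simp [inNbrs, hE'simple]
  have hrge : r ≤ (inNbrs E' (Fin.last n)).card := by omega
  by_cases hS1 : (down S1).Nonempty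
  · -- apply robustness of E to (down S1, down S2)
    rcases hrob (down S1) (down S2) hS1 (down_nonempty h2 hl2) (down_disjoint hd) with
      hc1 | hc2 | hc3
    · -- reach of down S1 is full
      by_cases hvr : Fin.last n ∈ reachSet E' r S1
      · -- condition (i)
        left
        have hins : insert (Fin.last n) (Finset.image Fin.castSucc (reachSet E r (down S1)))
            ⊆ reachSet E' r S1 :=
          Finset.insert_subset hvr (reach_lift E E' hrestr r S1)
        have hnotmem : Fin.last n ∉ Finset.image Fin.castSucc (reachSet E r (down S1)) := by
          simp only [Finset.mem_image, not_exists]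
          rintro j ⟨_, hj⟩
          exact (Fin.castSucc_lt_last j).ne hj
        have hc := Finset.card_le_card hins
        rw [Finset.card_insert_of_notMem hnotmem,
          Finset.card_image_of_injective _ (Fin.castSucc_injective n)] at hc
        have hcd : (down S1).card = (S1.erase (Fin.last n)).card := card_down S1
        have hce : (S1.erase (Fin.last n)).card = S1.card - 1 :=
          Finset.card_erase_of_mem hl
        have hpos : 1 ≤ S1.card := Finset.card_pos.mpr h1
        have hle : (reachSet E' r S1).card ≤ S1.card :=
          Finset.card_le_card (Finset.filter_subset _ _)
        omega
      · -- condition (iii): reach of S1 already has ≥ s elements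
        right; right
        have hvr' : (inNbrs E' (Fin.last n) \ S1).card < r := by
          rw [reachSet, Finset.mem_filter, not_and, not_le] at hvr
          exact hvr hl
        have hsplit : (inNbrs E' (Fin.last n) \ S1).card
            + (inNbrs E' (Fin.last n) ∩ S1).card = (inNbrs E' (Fin.last n)).card :=
          Finset.card_sdiff_add_card_inter _ _
        have hsub2 : inNbrs E' (Fin.last n) ∩ S1 ⊆ S1.erase (Fin.last n) := by
          intro x hx
          rw [Finset.mem_inter] at hx
          rw [Finset.mem_erase]
          exact ⟨fun h => hlastnbr (h ▸ hx.1), hx.2⟩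
        have hcinter : (inNbrs E' (Fin.last n) ∩ S1).card ≤ (S1.erase (Fin.last n)).card :=
          Finset.card_le_card hsub2
        have hge := card_reach_lift E E' hrestr r S1
        have hcd : (down S1).card = (S1.erase (Fin.last n)).card := card_down S1
        omega
    · -- reach of down S2 is full: condition (ii)
      right; left
      exact full_lift E E' hrestr r S2 hl2 hc2
    · -- sum condition lifts
      right; right
      have hg1 := card_reach_lift E E' hrestr r S1
      have hg2 := card_reach_lift E E' hrestr r S2
      omega
  · -- S1 = {Fin.last n}
    left
    have hS1eq : S1 = {Fin.last n} := by
      apply Finset.eq_singleton_iff_nonempty_unique_mem.mpr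
      refine ⟨h1, fun x hx => ?_⟩
      rcases Fin.eq_castSucc_or_eq_last x with ⟨j, rfl⟩ | rfl
      · exact absurd ⟨j, mem_down.mpr hx⟩ hS1
      · rfl
    have hreq : reachSet E' r S1 = S1 := by
      rw [reachSet, Finset.filter_eq_self]
      intro x hx
      rw [hS1eq, Finset.mem_singleton] at hx
      subst hx
      have : inNbrs E' (Fin.last n) \ S1 = inNbrs E' (Fin.last n) := by
        rw [hS1eq]
        rw [Finset.sdiff_eq_self_iff_disjoint, Finset.disjoint_singleton_right]
        exact hlastnbr
      rw [this]
      exact hrge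
    rw [hreq]

end AuxRobust

/-- Adding a new vertex with in-degree at least `r + s - 1` to a nonempty, nontrivial
`(r,s)`-robust digraph yields an `(r,s)`-robust digraph. -/
theorem stmt0 (n r s : ℕ) (hn : 2 ≤ n) (hs1 : 1 ≤ s) (hsn : s ≤ n)
    (E : Finset (Fin n × Fin n)) (hEsimple : ∀ i : Fin n, (i, i) ∉ E)
    (E' : Finset (Fin (n + 1) × Fin (n + 1))) (hE'simple : ∀ i : Fin (n + 1), (i, i) ∉ E')
    -- the edges among the old vertices are unchanged; all new edges are incident to `v_new`
    (hrestr : ∀ i j : Fin n, (Fin.castSucc i, Fin.castSucc j) ∈ E' ↔ (i, j) ∈ E)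
    (hrob : RSRobust E r s)
    -- the new vertex `v_new = Fin.last n` has in-degree at least `r + s - 1`
    (hdeg : r + s - 1 ≤ (inNbrs E' (Fin.last n)).card) :
    RSRobust E' r s := by
  intro S1 S2 h1 h2 hd
  by_cases hl1 : Fin.last n ∈ S1
  · exact AuxRobust.main_case r s hs1 E E' hE'simple hrestr hrob hdeg S1 S2 h1 h2 hd hl1
  · by_cases hl2 : Fin.last n ∈ S2
    · have := AuxRobust.main_case r s hs1 E E' hE'simple hrestr hrob hdeg
        S2 S1 h2 h1 hd.symm hl2
      rcases this with h | h | h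
      · exact Or.inr (Or.inl h)
      · exact Or.inl h
      · exact Or.inr (Or.inr (by omega))
    · -- neither set contains the new vertex
      rcases hrob (AuxRobust.down S1) (AuxRobust.down S2)
        (AuxRobust.down_nonempty h1 hl1) (AuxRobust.down_nonempty h2 hl2)
        (AuxRobust.down_disjoint hd) with hc1 | hc2 | hc3
      · exact Or.inl (AuxRobust.full_lift E E' hrestr r S1 hl1 hc1)
      · exact Or.inr (Or.inl (AuxRobust.full_lift E E' hrestr r S2 hl2 hc2))
      · right; right
        have hg1 := AuxRobust.card_reach_lift E E' hrestr r S1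
        have hg2 := AuxRobust.card_reach_lift E E' hrestr r S2
        omega
end

section
/- Let D be a digraph whose vertex set is partitioned into two nonempty sets X and Y such that every node of X has at most F in-neighbors in Y and every node of Y has at most F in-neighbors in X. Suppose all nodes are normal (no adversaries) and run ARC-P with parameter F, and let the initial values be x_i[0] = a for all i ∈ X and x_i[0] = b for all i ∈ Y with a ≠ b. Then x_i[t] = x_i[0] for all i and all t ∈ ℕ (for any valid choice of weights and removed sets), so the nodes never reach consensus. -/
/-- `R` is a valid ARC-P removed set with parameter `F` for a node `i` with
in-neighbor set `Vi` and current values `xt` : it is the union of a set `Ra` of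
removed larger values and a set `Rb` of removed smaller values.  If fewer than
(or exactly) `F` in-neighbors have values strictly larger than `xt i`, then all
of them are removed; otherwise exactly `F` in-neighbors carrying the largest
values are removed (ties broken arbitrarily/deterministically).  Likewise for
the strictly smaller values. -/
def ValidRemoved {V : Type*} [DecidableEq V] (Vi : Finset V) (xt : V → ℝ) (i : V) (F : ℕ)
    (R : Finset V) : Prop :=
  ∃ Ra Rb : Finset V,
    R = Ra ∪ Rb ∧
    Ra ⊆ Vi.filter (fun j => xt i < xt j) ∧
    ((Ra = Vi.filter (fun j => xt i < xt j) ∧ Ra.card ≤ F) ∨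
      (Ra.card = F ∧ ∀ j ∈ Ra, ∀ k ∈ (Vi.filter (fun j => xt i < xt j)) \ Ra, xt k ≤ xt j)) ∧
    Rb ⊆ Vi.filter (fun j => xt j < xt i) ∧
    ((Rb = Vi.filter (fun j => xt j < xt i) ∧ Rb.card ≤ F) ∨
      (Rb.card = F ∧ ∀ j ∈ Rb, ∀ k ∈ (Vi.filter (fun j => xt j < xt i)) \ Rb, xt j ≤ xt k))

/-- Node `i` performs the discrete-time ARC-P update with parameter `F` at time `t`
on the digraph with edge set `E`: the removed set `R t i` is valid, the weights on the
kept inclusive neighbors are at least `α` and sum to `1`, and the new value is the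
corresponding weighted average of the kept values. -/
def ArcpUpdate {V : Type*} [Fintype V] [DecidableEq V] (E : Finset (V × V)) (F : ℕ) (α : ℝ)
    (x : ℕ → V → ℝ) (R : ℕ → V → Finset V) (w : ℕ → V → V → ℝ) (i : V) (t : ℕ) : Prop :=
  ValidRemoved (inNbrs E i) (x t) i F (R t i) ∧
  (∀ j ∈ (insert i (inNbrs E i)) \ R t i, α ≤ w t i j) ∧
  (∑ j ∈ (insert i (inNbrs E i)) \ R t i, w t i j) = 1 ∧
  x (t + 1) i = ∑ j ∈ (insert i (inNbrs E i)) \ R t i, w t i j * x t j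

lemma arcp_keep {V : Type*} [Fintype V] [DecidableEq V] (E : Finset (V × V)) (F : ℕ) (α : ℝ)
    (x : ℕ → V → ℝ) (R : ℕ → V → Finset V) (w : ℕ → V → V → ℝ) (i : V) (t : ℕ)
    (h : ArcpUpdate E F α x R w i t)
    (hc : ((inNbrs E i).filter (fun j => x t j ≠ x t i)).card ≤ F) :
    x (t + 1) i = x t i := by
  obtain ⟨⟨Ra, Rb, hR, hRa, hRa2, hRb, hRb2⟩, _, hsum, hx⟩ := h
  set Sg := (inNbrs E i).filter (fun j => x t i < x t j) with hSg
  set Sl := (inNbrs E i).filter (fun j => x t j < x t i) with hSl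
  have hgsub : Sg ⊆ (inNbrs E i).filter (fun j => x t j ≠ x t i) := by
    intro j hj; simp only [Finset.mem_filter, hSg] at *
    exact ⟨hj.1, (ne_of_gt hj.2)⟩
  have hlsub : Sl ⊆ (inNbrs E i).filter (fun j => x t j ≠ x t i) := by
    intro j hj; simp only [Finset.mem_filter, hSl] at *
    exact ⟨hj.1, (ne_of_lt hj.2)⟩
  have hRaeq : Ra = Sg := by
    rcases hRa2 with ⟨h1, _⟩ | ⟨h1, _⟩
    · exact h1
    · exact Finset.eq_of_subset_of_card_le hRa
        (le_trans (le_trans (Finset.card_le_card hgsub) hc) h1.ge)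
  have hRbeq : Rb = Sl := by
    rcases hRb2 with ⟨h1, _⟩ | ⟨h1, _⟩
    · exact h1
    · exact Finset.eq_of_subset_of_card_le hRb
        (le_trans (le_trans (Finset.card_le_card hlsub) hc) h1.ge)
  have hkept : ∀ j ∈ (insert i (inNbrs E i)) \ R t i, x t j = x t i := by
    intro j hj
    rw [Finset.mem_sdiff, hR, hRaeq, hRbeq, Finset.mem_union, Finset.mem_insert] at hj
    obtain ⟨hj1 | hj1, hj2⟩ := hj
    · rw [hj1]
    · by_contra hne
      rcases lt_or_gt_of_ne hne with hlt | hgt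
      · exact hj2 (Or.inr (Finset.mem_filter.mpr ⟨hj1, hlt⟩))
      · exact hj2 (Or.inl (Finset.mem_filter.mpr ⟨hj1, hgt⟩))
  rw [hx, Finset.sum_congr rfl (fun j hj => by rw [hkept j hj]), ← Finset.sum_mul, hsum, one_mul]

/-- If the node set is partitioned into two nonempty sets `X`, `Y` such that every node of
`X` has at most `F` in-neighbors in `Y` and vice versa, all nodes are normal and run
ARC-P with parameter `F`, and the initial values are `a` on `X` and `b ≠ a` on `Y`, then
every node keeps its initial value forever, so consensus is never reached. -/
theorem stmt5 {V : Type*} [Fintype V] [DecidableEq V]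
    (E : Finset (V × V)) (hsimple : ∀ i : V, (i, i) ∉ E)
    (F : ℕ) (α : ℝ) (hα0 : 0 < α) (hα1 : α < 1)
    (X Y : Finset V) (hX : X.Nonempty) (hY : Y.Nonempty)
    (hdisj : Disjoint X Y) (hcover : X ∪ Y = Finset.univ)
    (hXF : ∀ i ∈ X, (inNbrs E i ∩ Y).card ≤ F)
    (hYF : ∀ i ∈ Y, (inNbrs E i ∩ X).card ≤ F)
    (a b : ℝ) (hab : a ≠ b)
    (x : ℕ → V → ℝ) (R : ℕ → V → Finset V) (w : ℕ → V → V → ℝ)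
    (hx0X : ∀ i ∈ X, x 0 i = a) (hx0Y : ∀ i ∈ Y, x 0 i = b)
    (hupd : ∀ t : ℕ, ∀ i : V, ArcpUpdate E F α x R w i t) :
    ∀ t : ℕ, ∀ i : V, x t i = x 0 i := by
  have main : ∀ t : ℕ, (∀ i ∈ X, x t i = a) ∧ (∀ i ∈ Y, x t i = b) := by
    intro t
    induction t with
    | zero => exact ⟨hx0X, hx0Y⟩
    | succ t ih =>
      obtain ⟨ihX, ihY⟩ := ih
      have hstep : ∀ i : V, x (t + 1) i = x t i := by
        intro i
        have hiXY : i ∈ X ∪ Y := hcover ▸ Finset.mem_univ i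
        rw [Finset.mem_union] at hiXY
        rcases hiXY with hi | hi
        · refine arcp_keep E F α x R w i t (hupd t i) (le_trans (Finset.card_le_card ?_) (hXF i hi))
          intro j hj
          rw [Finset.mem_filter] at hj
          have hjXY : j ∈ X ∪ Y := hcover ▸ Finset.mem_univ j
          rw [Finset.mem_union] at hjXY
          rcases hjXY with hjX | hjY
          · exact absurd (by rw [ihX j hjX, ihX i hi]) hj.2
          · exact Finset.mem_inter.mpr ⟨hj.1, hjY⟩
        · refine arcp_keep E F α x R w i t (hupd t i) (le_trans (Finset.card_le_card ?_) (hYF i hi))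
          intro j hj
          rw [Finset.mem_filter] at hj
          have hjXY : j ∈ X ∪ Y := hcover ▸ Finset.mem_univ j
          rw [Finset.mem_union] at hjXY
          rcases hjXY with hjX | hjY
          · exact Finset.mem_inter.mpr ⟨hj.1, hjX⟩
          · exact absurd (by rw [ihY j hjY, ihY i hi]) hj.2
      exact ⟨fun i hi => (hstep i).trans (ihX i hi), fun i hi => (hstep i).trans (ihY i hi)⟩
  intro t i
  have hiXY : i ∈ X ∪ Y := hcover ▸ Finset.mem_univ i
  rw [Finset.mem_union] at hiXY
  rcases hiXY with hi | hi
  · rw [(main t).1 i hi, hx0X i hi]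
  · rw [(main t).2 i hi, hx0Y i hi]
end

section
/- Consider discrete-time ARC-P with parameter F on a digraph, and let i be a normal node that has at most F adversary in-neighbors at time t. Then every value used by node i in its update at time t lies between the minimum and maximum values of the normal nodes: for every j ∈ J_i[t] \ R_i[t], one has m[t] ≤ x_j[t] ≤ M[t]. Consequently, m[t] ≤ x_i[t+1] ≤ M[t]. -/
/-- If a normal node `i` has at most `F` adversary in-neighbors at time `t`, then every
value used by `i` in its ARC-P update at time `t` lies between the minimum `m[t]` and
maximum `M[t]` of the normal values, and consequently `m[t] ≤ x_i[t+1] ≤ M[t]`.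
Here `A` is the adversary set and `Finset.univ \ A` the set of normal nodes. -/
theorem stmt6 {V : Type*} [Fintype V] [DecidableEq V]
    (E : Finset (V × V)) (hsimple : ∀ i : V, (i, i) ∉ E)
    (A : Finset V) (hN : (Finset.univ \ A).Nonempty)
    (F : ℕ) (α : ℝ) (hα0 : 0 < α) (hα1 : α < 1)
    (x : ℕ → V → ℝ) (R : ℕ → V → Finset V) (w : ℕ → V → V → ℝ)
    (i : V) (hi : i ∉ A) (t : ℕ)
    (hloc : (inNbrs E i ∩ A).card ≤ F)
    (hupd : ArcpUpdate E F α x R w i t) :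
    (∀ j ∈ (insert i (inNbrs E i)) \ R t i,
        (Finset.univ \ A).inf' hN (x t) ≤ x t j ∧
        x t j ≤ (Finset.univ \ A).sup' hN (x t)) ∧
    (Finset.univ \ A).inf' hN (x t) ≤ x (t + 1) i ∧
    x (t + 1) i ≤ (Finset.univ \ A).sup' hN (x t) := by

  obtain ⟨hvalid, hw, hwsum, hxupd⟩ := hupd
  obtain ⟨Ra, Rb, hR, hRa, hcA, hRb, hcB⟩ := hvalid
  set m := (Finset.univ \ A).inf' hN (x t) with hm
  set M := (Finset.univ \ A).sup' hN (x t) with hM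
  have hnorm : ∀ k : V, k ∉ A → m ≤ x t k ∧ x t k ≤ M := by
    intro k hk
    have hk' : k ∈ Finset.univ \ A := by simp [hk]
    exact ⟨Finset.inf'_le _ hk', Finset.le_sup' _ hk'⟩
  have hmain : ∀ j ∈ (insert i (inNbrs E i)) \ R t i, m ≤ x t j ∧ x t j ≤ M := by
    intro j hj
    rw [Finset.mem_sdiff, Finset.mem_insert] at hj
    obtain ⟨hj1, hj2⟩ := hj
    rcases hj1 with rfl | hjV
    · exact hnorm _ hi
    by_cases hjA : j ∈ A
    · constructor
      · by_contra hlt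
        push_neg at hlt
        have hij : x t j < x t i := lt_of_lt_of_le hlt (hnorm i hi).1
        have hjf : j ∈ (inNbrs E i).filter (fun k => x t k < x t i) := by
          simp [Finset.mem_filter, hjV, hij]
        have hjRb : j ∉ Rb := fun h => hj2 (hR ▸ Finset.mem_union_right _ h)
        rcases hcB with ⟨heq, _⟩ | ⟨hcard, hmax⟩
        · exact hjRb (heq ▸ hjf)
        · have hsub : insert j Rb ⊆ inNbrs E i ∩ A := by
            intro k hk
            rcases Finset.mem_insert.mp hk with rfl | hk
            · exact Finset.mem_inter.mpr ⟨hjV, hjA⟩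
            · have hkf := hRb hk
              have hkV : k ∈ inNbrs E i := (Finset.mem_filter.mp hkf).1
              have hkx : x t k ≤ x t j := hmax k hk j (Finset.mem_sdiff.mpr ⟨hjf, hjRb⟩)
              have hkA : k ∈ A := by
                by_contra hkA
                exact absurd ((hnorm k hkA).1.trans hkx) (not_le.mpr hlt)
              exact Finset.mem_inter.mpr ⟨hkV, hkA⟩
          have : F + 1 ≤ (inNbrs E i ∩ A).card := by
            calc F + 1 = (insert j Rb).card := by
                  rw [Finset.card_insert_of_notMem hjRb, hcard]
              _ ≤ _ := Finset.card_le_card hsub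
          omega
      · by_contra hlt
        push_neg at hlt
        have hij : x t i < x t j := lt_of_le_of_lt (hnorm i hi).2 hlt
        have hjf : j ∈ (inNbrs E i).filter (fun k => x t i < x t k) := by
          simp [Finset.mem_filter, hjV, hij]
        have hjRa : j ∉ Ra := fun h => hj2 (hR ▸ Finset.mem_union_left _ h)
        rcases hcA with ⟨heq, _⟩ | ⟨hcard, hmax⟩
        · exact hjRa (heq ▸ hjf)
        · have hsub : insert j Ra ⊆ inNbrs E i ∩ A := by
            intro k hk
            rcases Finset.mem_insert.mp hk with rfl | hk
            · exact Finset.mem_inter.mpr ⟨hjV, hjA⟩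
            · have hkf := hRa hk
              have hkV : k ∈ inNbrs E i := (Finset.mem_filter.mp hkf).1
              have hkx : x t j ≤ x t k := hmax k hk j (Finset.mem_sdiff.mpr ⟨hjf, hjRa⟩)
              have hkA : k ∈ A := by
                by_contra hkA
                exact absurd (hkx.trans (hnorm k hkA).2) (not_le.mpr hlt)
              exact Finset.mem_inter.mpr ⟨hkV, hkA⟩
          have : F + 1 ≤ (inNbrs E i ∩ A).card := by
            calc F + 1 = (insert j Ra).card := by
                  rw [Finset.card_insert_of_notMem hjRa, hcard]
              _ ≤ _ := Finset.card_le_card hsub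
          omega
    · exact hnorm _ hjA
  have hwnn : ∀ j ∈ (insert i (inNbrs E i)) \ R t i, (0:ℝ) ≤ w t i j :=
    fun j hj => le_trans hα0.le (hw j hj)
  refine ⟨hmain, ?_, ?_⟩
  · rw [hxupd]
    calc m = ∑ j ∈ (insert i (inNbrs E i)) \ R t i, w t i j * m := by
          rw [← Finset.sum_mul, hwsum, one_mul]
      _ ≤ _ := Finset.sum_le_sum fun j hj =>
          mul_le_mul_of_nonneg_left (hmain j hj).1 (hwnn j hj)
  · rw [hxupd]
    calc ∑ j ∈ (insert i (inNbrs E i)) \ R t i, w t i j * x t j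
        ≤ ∑ j ∈ (insert i (inNbrs E i)) \ R t i, w t i j * M :=
          Finset.sum_le_sum fun j hj =>
            mul_le_mul_of_nonneg_left (hmain j hj).2 (hwnn j hj)
      _ = M := by rw [← Finset.sum_mul, hwsum, one_mul]
end

section
/- Suppose each normal node updates its value according to discrete-time ARC-P with parameter F, and the adversary nodes are malicious and either F-totally bounded or F-locally bounded. Then for every normal node i and every t ∈ ℕ, x_i[t] ∈ [m[0], M[0]], regardless of the network topology. -/
/-- Safety of ARC-P: if each normal node runs discrete-time ARC-P with parameter `F`
and the malicious adversary set `A` is `F`-totally bounded or `F`-locally bounded, then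
every normal value stays in `[m[0], M[0]]`, regardless of the network topology. -/
theorem stmt7 {V : Type*} [Fintype V] [DecidableEq V]
    (E : Finset (V × V)) (hsimple : ∀ i : V, (i, i) ∉ E)
    (A : Finset V) (hN : (Finset.univ \ A).Nonempty)
    (F : ℕ) (α : ℝ) (hα0 : 0 < α) (hα1 : α < 1)
    (hA : A.card ≤ F ∨ ∀ i ∉ A, (inNbrs E i ∩ A).card ≤ F)
    (x : ℕ → V → ℝ) (R : ℕ → V → Finset V) (w : ℕ → V → V → ℝ)
    (hupd : ∀ t : ℕ, ∀ i ∉ A, ArcpUpdate E F α x R w i t) :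
    ∀ t : ℕ, ∀ i ∉ A,
      x t i ∈ Set.Icc ((Finset.univ \ A).inf' hN (x 0)) ((Finset.univ \ A).sup' hN (x 0)) := by
  set m0 := (Finset.univ \ A).inf' hN (x 0) with hm0
  set M0 := (Finset.univ \ A).sup' hN (x 0) with hM0def
  intro t
  induction t with
  | zero =>
    intro i hi
    have hi' : i ∈ Finset.univ \ A := by simp [hi]
    exact ⟨Finset.inf'_le _ hi', Finset.le_sup' _ hi'⟩
  | succ t ih =>
    intro i hi
    obtain ⟨hR, hw, hsum, hx⟩ := hupd t i hi
    obtain ⟨Ra, Rb, hRab, hRaSub, hRaCase, hRbSub, hRbCase⟩ := hR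
    have hii := ih i hi
    -- all kept values lie in [m0, M0]
    have key : ∀ j ∈ (insert i (inNbrs E i)) \ R t i, m0 ≤ x t j ∧ x t j ≤ M0 := by
      intro j hj
      by_cases hjA : j ∈ A
      · rw [Finset.mem_sdiff] at hj
        obtain ⟨hjmem, hjR⟩ := hj
        have hji : j ≠ i := fun h => hi (h ▸ hjA)
        have hjV : j ∈ inNbrs E i := by
          rcases Finset.mem_insert.mp hjmem with h | h
          · exact absurd h hji
          · exact h
        have hjRa : j ∉ Ra := fun h => hjR (hRab ▸ Finset.mem_union_left _ h)
        have hjRb : j ∉ Rb := fun h => hjR (hRab ▸ Finset.mem_union_right _ h)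
        constructor
        · by_contra hlt
          push_neg at hlt
          have hjfilt : j ∈ (inNbrs E i).filter (fun k => x t k < x t i) := by
            refine Finset.mem_filter.mpr ⟨hjV, ?_⟩
            exact lt_of_lt_of_le hlt hii.1
          rcases hRbCase with ⟨heq, _⟩ | ⟨hcard, hmin⟩
          · exact hjRb (heq ▸ hjfilt)
          · -- every removed value is ≤ x t j < m0, so all of Rb ∪ {j} are adversaries
            have hTsub : insert j Rb ⊆ inNbrs E i ∩ A := by
              intro r hr
              rcases Finset.mem_insert.mp hr with h | h
              · subst h; exact Finset.mem_inter.mpr ⟨hjV, hjA⟩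
              · have hrV : r ∈ inNbrs E i :=
                  Finset.filter_subset _ _ (hRbSub h)
                have hrval : x t r ≤ x t j :=
                  hmin r h j (Finset.mem_sdiff.mpr ⟨hjfilt, hjRb⟩)
                have hrA : r ∈ A := by
                  by_contra hrA
                  exact absurd ((ih r hrA).1) (not_le.mpr (lt_of_le_of_lt hrval hlt))
                exact Finset.mem_inter.mpr ⟨hrV, hrA⟩
            have hTcard : (insert j Rb).card = F + 1 := by
              rw [Finset.card_insert_of_notMem hjRb, hcard]
            rcases hA with htot | hloc
            · have := Finset.card_le_card
                (hTsub.trans (Finset.inter_subset_right))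
              omega
            · have := Finset.card_le_card hTsub
              have := hloc i hi
              omega
        · by_contra hlt
          push_neg at hlt
          have hjfilt : j ∈ (inNbrs E i).filter (fun k => x t i < x t k) := by
            refine Finset.mem_filter.mpr ⟨hjV, ?_⟩
            exact lt_of_le_of_lt hii.2 hlt
          rcases hRaCase with ⟨heq, _⟩ | ⟨hcard, hmax⟩
          · exact hjRa (heq ▸ hjfilt)
          · have hTsub : insert j Ra ⊆ inNbrs E i ∩ A := by
              intro r hr
              rcases Finset.mem_insert.mp hr with h | h
              · subst h; exact Finset.mem_inter.mpr ⟨hjV, hjA⟩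
              · have hrV : r ∈ inNbrs E i :=
                  Finset.filter_subset _ _ (hRaSub h)
                have hrval : x t j ≤ x t r :=
                  hmax r h j (Finset.mem_sdiff.mpr ⟨hjfilt, hjRa⟩)
                have hrA : r ∈ A := by
                  by_contra hrA
                  exact absurd ((ih r hrA).2) (not_le.mpr (lt_of_lt_of_le hlt hrval))
                exact Finset.mem_inter.mpr ⟨hrV, hrA⟩
            have hTcard : (insert j Ra).card = F + 1 := by
              rw [Finset.card_insert_of_notMem hjRa, hcard]
            rcases hA with htot | hloc
            · have := Finset.card_le_card
                (hTsub.trans (Finset.inter_subset_right))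
              omega
            · have := Finset.card_le_card hTsub
              have := hloc i hi
              omega
      · exact ⟨(ih j hjA).1, (ih j hjA).2⟩
    have hwpos : ∀ j ∈ (insert i (inNbrs E i)) \ R t i, (0:ℝ) ≤ w t i j :=
      fun j hj => le_of_lt (lt_of_lt_of_le hα0 (hw j hj))
    constructor
    · rw [hx]
      calc m0 = ∑ j ∈ (insert i (inNbrs E i)) \ R t i, w t i j * m0 := by
            rw [← Finset.sum_mul, hsum, one_mul]
        _ ≤ ∑ j ∈ (insert i (inNbrs E i)) \ R t i, w t i j * x t j :=
            Finset.sum_le_sum (fun j hj =>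
              mul_le_mul_of_nonneg_left (key j hj).1 (hwpos j hj))
    · rw [hx]
      calc ∑ j ∈ (insert i (inNbrs E i)) \ R t i, w t i j * x t j
          ≤ ∑ j ∈ (insert i (inNbrs E i)) \ R t i, w t i j * M0 :=
            Finset.sum_le_sum (fun j hj =>
              mul_le_mul_of_nonneg_left (key j hj).2 (hwpos j hj))
        _ = M0 := by rw [← Finset.sum_mul, hsum, one_mul]
end

section
/- Suppose each normal node updates its value according to discrete-time ARC-P with parameter F, and the adversary nodes are malicious and either F-totally bounded or F-locally bounded. Then M[t] is a nonincreasing function of t, m[t] is a nondecreasing function of t, and consequently Ψ[t] = M[t] − m[t] is nonincreasing in t. -/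
/-- Monotonicity under ARC-P: if each normal node runs discrete-time ARC-P with parameter
`F` and the malicious adversary set `A` is `F`-totally bounded or `F`-locally bounded,
then `M[t]` is nonincreasing, `m[t]` is nondecreasing, and `Ψ[t] = M[t] - m[t]` is
nonincreasing in `t`. -/
theorem stmt8 {V : Type*} [Fintype V] [DecidableEq V]
    (E : Finset (V × V)) (hsimple : ∀ i : V, (i, i) ∉ E)
    (A : Finset V) (hN : (Finset.univ \ A).Nonempty)
    (F : ℕ) (α : ℝ) (hα0 : 0 < α) (hα1 : α < 1)
    (hA : A.card ≤ F ∨ ∀ i ∉ A, (inNbrs E i ∩ A).card ≤ F)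
    (x : ℕ → V → ℝ) (R : ℕ → V → Finset V) (w : ℕ → V → V → ℝ)
    (hupd : ∀ t : ℕ, ∀ i ∉ A, ArcpUpdate E F α x R w i t) :
    Antitone (fun t => (Finset.univ \ A).sup' hN (x t)) ∧
    Monotone (fun t => (Finset.univ \ A).inf' hN (x t)) ∧
    Antitone (fun t =>
      (Finset.univ \ A).sup' hN (x t) - (Finset.univ \ A).inf' hN (x t)) := by
  have hMstep : ∀ t, ∀ i ∈ Finset.univ \ A,
      x (t+1) i ≤ (Finset.univ \ A).sup' hN (x t) := by
    intro t i hi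
    have hiA : i ∉ A := (Finset.mem_sdiff.mp hi).2
    obtain ⟨hval, hw, hsum, hx⟩ := hupd t i hiA
    obtain ⟨Ra, Rb, hR, hRa, hRacase, hRb, hRbcase⟩ := hval
    set M := (Finset.univ \ A).sup' hN (x t) with hM
    have hnormalle : ∀ j ∈ Finset.univ \ A, x t j ≤ M := fun j hj => Finset.le_sup' _ hj
    have hkey : ∀ j ∈ (insert i (inNbrs E i)) \ R t i, x t j ≤ M := by
      intro j hj
      by_cases hjA : j ∈ A
      · by_contra hlt
        push_neg at hlt
        have hiM : x t i ≤ M := hnormalle i hi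
        have hij : x t i < x t j := lt_of_le_of_lt hiM hlt
        have hjne : j ≠ i := fun h => hiA (h ▸ hjA)
        obtain ⟨hjmem, hjR⟩ := Finset.mem_sdiff.mp hj
        have hjV : j ∈ inNbrs E i := by
          rcases Finset.mem_insert.mp hjmem with h | h
          · exact absurd h hjne
          · exact h
        have hjfil : j ∈ (inNbrs E i).filter (fun k => x t i < x t k) :=
          Finset.mem_filter.mpr ⟨hjV, hij⟩
        have hjRa : j ∉ Ra := fun h => hjR (hR ▸ Finset.mem_union_left _ h)
        rcases hRacase with ⟨heq, _⟩ | ⟨hcard, hmax⟩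
        · exact hjRa (heq ▸ hjfil)
        · have hRaA : ∀ a ∈ Ra, a ∈ A := by
            intro a ha
            by_contra haA
            have haN : a ∈ Finset.univ \ A :=
              Finset.mem_sdiff.mpr ⟨Finset.mem_univ a, haA⟩
            have := hmax a ha j (Finset.mem_sdiff.mpr ⟨hjfil, hjRa⟩)
            exact absurd (le_trans this (hnormalle a haN)) (not_le.mpr hlt)
          have hsub : insert j Ra ⊆ inNbrs E i ∩ A := by
            intro a ha
            rcases Finset.mem_insert.mp ha with rfl | ha
            · exact Finset.mem_inter.mpr ⟨hjV, hjA⟩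
            · exact Finset.mem_inter.mpr ⟨(Finset.mem_filter.mp (hRa ha)).1, hRaA a ha⟩
          have hcard1 : F + 1 ≤ (inNbrs E i ∩ A).card := by
            have := Finset.card_le_card hsub
            rwa [Finset.card_insert_of_notMem hjRa, hcard] at this
          rcases hA with htot | hloc
          · have : (inNbrs E i ∩ A).card ≤ A.card :=
              Finset.card_le_card Finset.inter_subset_right
            omega
          · have := hloc i hiA; omega
      · exact hnormalle j (Finset.mem_sdiff.mpr ⟨Finset.mem_univ j, hjA⟩)
    rw [hx]
    calc ∑ j ∈ (insert i (inNbrs E i)) \ R t i, w t i j * x t j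
        ≤ ∑ j ∈ (insert i (inNbrs E i)) \ R t i, w t i j * M :=
          Finset.sum_le_sum (fun j hj =>
            mul_le_mul_of_nonneg_left (hkey j hj) (le_trans hα0.le (hw j hj)))
      _ = M := by rw [← Finset.sum_mul, hsum, one_mul]
  have hmstep : ∀ t, ∀ i ∈ Finset.univ \ A,
      (Finset.univ \ A).inf' hN (x t) ≤ x (t+1) i := by
    intro t i hi
    have hiA : i ∉ A := (Finset.mem_sdiff.mp hi).2
    obtain ⟨hval, hw, hsum, hx⟩ := hupd t i hiA
    obtain ⟨Ra, Rb, hR, hRa, hRacase, hRb, hRbcase⟩ := hval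
    set m := (Finset.univ \ A).inf' hN (x t) with hm
    have hnormalle : ∀ j ∈ Finset.univ \ A, m ≤ x t j := fun j hj => Finset.inf'_le _ hj
    have hkey : ∀ j ∈ (insert i (inNbrs E i)) \ R t i, m ≤ x t j := by
      intro j hj
      by_cases hjA : j ∈ A
      · by_contra hlt
        push_neg at hlt
        have hiM : m ≤ x t i := hnormalle i hi
        have hij : x t j < x t i := lt_of_lt_of_le hlt hiM
        have hjne : j ≠ i := fun h => hiA (h ▸ hjA)
        obtain ⟨hjmem, hjR⟩ := Finset.mem_sdiff.mp hj
        have hjV : j ∈ inNbrs E i := by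
          rcases Finset.mem_insert.mp hjmem with h | h
          · exact absurd h hjne
          · exact h
        have hjfil : j ∈ (inNbrs E i).filter (fun k => x t k < x t i) :=
          Finset.mem_filter.mpr ⟨hjV, hij⟩
        have hjRb : j ∉ Rb := fun h => hjR (hR ▸ Finset.mem_union_right _ h)
        rcases hRbcase with ⟨heq, _⟩ | ⟨hcard, hmin⟩
        · exact hjRb (heq ▸ hjfil)
        · have hRbA : ∀ a ∈ Rb, a ∈ A := by
            intro a ha
            by_contra haA
            have haN : a ∈ Finset.univ \ A :=
              Finset.mem_sdiff.mpr ⟨Finset.mem_univ a, haA⟩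
            have := hmin a ha j (Finset.mem_sdiff.mpr ⟨hjfil, hjRb⟩)
            exact absurd (le_trans (hnormalle a haN) this) (not_le.mpr hlt)
          have hsub : insert j Rb ⊆ inNbrs E i ∩ A := by
            intro a ha
            rcases Finset.mem_insert.mp ha with rfl | ha
            · exact Finset.mem_inter.mpr ⟨hjV, hjA⟩
            · exact Finset.mem_inter.mpr ⟨(Finset.mem_filter.mp (hRb ha)).1, hRbA a ha⟩
          have hcard1 : F + 1 ≤ (inNbrs E i ∩ A).card := by
            have := Finset.card_le_card hsub
            rwa [Finset.card_insert_of_notMem hjRb, hcard] at this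
          rcases hA with htot | hloc
          · have : (inNbrs E i ∩ A).card ≤ A.card :=
              Finset.card_le_card Finset.inter_subset_right
            omega
          · have := hloc i hiA; omega
      · exact hnormalle j (Finset.mem_sdiff.mpr ⟨Finset.mem_univ j, hjA⟩)
    rw [hx]
    calc m = ∑ j ∈ (insert i (inNbrs E i)) \ R t i, w t i j * m := by
            rw [← Finset.sum_mul, hsum, one_mul]
      _ ≤ ∑ j ∈ (insert i (inNbrs E i)) \ R t i, w t i j * x t j :=
          Finset.sum_le_sum (fun j hj =>
            mul_le_mul_of_nonneg_left (hkey j hj) (le_trans hα0.le (hw j hj)))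
  have hMa : Antitone (fun t => (Finset.univ \ A).sup' hN (x t)) :=
    antitone_nat_of_succ_le (fun t => Finset.sup'_le _ _ (fun i hi => hMstep t i hi))
  have hma : Monotone (fun t => (Finset.univ \ A).inf' hN (x t)) :=
    monotone_nat_of_le_succ (fun t => Finset.le_inf' _ _ (fun i hi => hmstep t i hi))
  exact ⟨hMa, hma, fun a b hab => sub_le_sub (hMa hab) (hma hab)⟩
end

section
/- Consider a time-invariant digraph D = (V, E) in which each normal node updates its value according to discrete-time ARC-P with parameter F, and suppose the set of malicious adversary nodes is F-totally bounded (|A| ≤ F). If D is (F+1,F+1)-robust, then the normal nodes achieve resilient asymptotic consensus: there exists L ∈ ℝ such that lim_{t→∞} x_i[t] = L for every normal node i, and x_i[t] ∈ [m[0], M[0]] for all t and all normal i, for any choice of initial values, any valid weight sequences, and any adversary value trajectories. -/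
open Finset

theorem sum_mul_le_mul_add_one_sub_mul {ι : Type*} {s : Finset ι} {w y : ι → ℝ} {α c B : ℝ}
    (hα : 0 ≤ α) (hw : ∀ j ∈ s, α ≤ w j) (hsum : ∑ j ∈ s, w j = 1) {j₀ : ι} (hj₀ : j₀ ∈ s)
    (hB : ∀ j ∈ s, y j ≤ B) (hc : y j₀ ≤ c) (hcB : c ≤ B) :
    ∑ j ∈ s, w j * y j ≤ α * c + (1 - α) * B := by
  have hdefect : ∑ j ∈ s, w j * (B - y j) = B - ∑ j ∈ s, w j * y j := by
    simp only [mul_sub, sum_sub_distrib, ← sum_mul, hsum, one_mul]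
  have hsingle : w j₀ * (B - y j₀) ≤ ∑ j ∈ s, w j * (B - y j) :=
    single_le_sum (fun j hj => mul_nonneg (hα.trans (hw j hj)) (sub_nonneg.2 (hB j hj))) hj₀
  have hα_le : α * (B - c) ≤ w j₀ * (B - y j₀) :=
    mul_le_mul (hw j₀ hj₀) (by linarith) (sub_nonneg.2 hcB) (hα.trans (hw j₀ hj₀))
  linarith

open Filter Topology in
theorem eq_zero_of_tendsto_of_le_mul {u : ℕ → ℝ} {ℓ γ : ℝ} {c : ℕ}
    (hu : Tendsto u atTop (𝓝 ℓ)) (hu0 : ∀ n, 0 ≤ u n) (hγ : γ < 1)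
    (hc : ∀ n, u (n + c) ≤ γ * u n) : ℓ = 0 := by
  have hℓ0 : 0 ≤ ℓ := ge_of_tendsto' hu hu0
  have hℓγ : ℓ ≤ γ * ℓ :=
    le_of_tendsto_of_tendsto' (hu.comp (tendsto_add_atTop_nat c)) (hu.const_mul γ) hc
  nlinarith

theorem exists_le_not_of_lt {f : ℕ → ℕ} {P : ℕ → Prop} (h : ∀ k, P k → f (k + 1) < f k) :
    ∃ k ≤ f 0, ¬ P k := by
  by_contra! hP
  have hdecay : ∀ k ≤ f 0 + 1, f k + k ≤ f 0 := by
    intro k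
    induction k with
    | zero => simp
    | succ k ih =>
      intro hk
      have := h k (hP k (by omega))
      have := ih (by omega)
      omega
  have := hdecay (f 0 + 1) le_rfl
  omega

namespace ValidRemoved

variable {V : Type*} [DecidableEq V] {Vi R : Finset V} {xt : V → ℝ} {i : V} {F : ℕ}

theorem neg (h : ValidRemoved Vi xt i F R) : ValidRemoved Vi (-xt) i F R := by
  obtain ⟨Ra, Rb, hR, hRa, hRa_case, hRb, hRb_case⟩ := h
  simp only [ValidRemoved, Pi.neg_apply, neg_lt_neg_iff, neg_le_neg_iff]
  exact ⟨Rb, Ra, hR.trans (union_comm _ _), hRb, hRb_case, hRa, hRa_case⟩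

theorem self_mem_kept (h : ValidRemoved Vi xt i F R) : i ∈ insert i Vi \ R := by
  obtain ⟨Ra, Rb, rfl, hRa, -, hRb, -⟩ := h
  refine mem_sdiff.2 ⟨mem_insert_self _ _, fun hi => ?_⟩
  rcases mem_union.1 hi with hi | hi
  · exact lt_irrefl _ (mem_filter.1 (hRa hi)).2
  · exact lt_irrefl _ (mem_filter.1 (hRb hi)).2

/-- `j` itself and the `F` removed values above `xt i` are all at least `xt j`. -/
theorem lt_card_filter_le_of_mem_kept (h : ValidRemoved Vi xt i F R) {j : V}
    (hj : j ∈ insert i Vi \ R) (hij : xt i < xt j) : F < #(Vi.filter (fun k => xt j ≤ xt k)) := by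
  obtain ⟨Ra, Rb, rfl, hRa, hRa_case, -, -⟩ := h
  obtain ⟨hjmem, hjR⟩ := mem_sdiff.1 hj
  have hjVi : j ∈ Vi := (mem_insert.1 hjmem).resolve_left (by rintro rfl; exact lt_irrefl _ hij)
  have hjRa : j ∉ Ra := fun hjRa => hjR (mem_union_left _ hjRa)
  have hjU : j ∈ Vi.filter (fun k => xt i < xt k) := mem_filter.2 ⟨hjVi, hij⟩
  rcases hRa_case with ⟨rfl, -⟩ | ⟨hcard, hmax⟩
  · exact absurd hjU hjRa
  · have hsub : insert j Ra ⊆ Vi.filter (fun k => xt j ≤ xt k) := by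
      intro k hk
      rcases mem_insert.1 hk with rfl | hk
      · exact mem_filter.2 ⟨hjVi, le_rfl⟩
      · exact mem_filter.2 ⟨(mem_filter.1 (hRa hk)).1, hmax k hk j (mem_sdiff.2 ⟨hjU, hjRa⟩)⟩
    have := card_le_card hsub
    rw [card_insert_of_notMem hjRa, hcard] at this
    omega

theorem le_of_mem_kept {A : Finset V} (h : ValidRemoved Vi xt i F R) (hA : #A ≤ F) (hi : i ∉ A)
    {B : ℝ} (hB : ∀ j ∉ A, xt j ≤ B) {j : V} (hj : j ∈ insert i Vi \ R) : xt j ≤ B := by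
  by_contra! hjB
  have hlarge : Vi.filter (fun k => xt j ≤ xt k) ⊆ A := fun k hk => by
    by_contra hkA
    exact absurd (hB k hkA) (not_le.2 (hjB.trans_le (mem_filter.1 hk).2))
  have := h.lt_card_filter_le_of_mem_kept hj ((hB i hi).trans_lt hjB)
  have := card_le_card hlarge
  omega

/-- At most `F` of the in-neighbors below the own value are removed. -/
theorem exists_mem_kept_le (h : ValidRemoved Vi xt i F R) {θ : ℝ}
    (hθ : xt i ≤ θ ∨ F < #(Vi.filter (fun j => xt j ≤ θ))) : ∃ j ∈ insert i Vi \ R, xt j ≤ θ := by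
  by_cases hiθ : xt i ≤ θ
  · exact ⟨i, h.self_mem_kept, hiθ⟩
  obtain ⟨Ra, Rb, rfl, hRa, -, -, hRb_case⟩ := h
  have hRbF : #Rb ≤ F := by rcases hRb_case with ⟨-, h⟩ | ⟨h, -⟩ <;> omega
  obtain ⟨j, hjT, hjRb⟩ := exists_mem_notMem_of_card_lt_card
    (hRbF.trans_lt (hθ.resolve_left hiθ))
  obtain ⟨hjVi, hjθ⟩ := mem_filter.1 hjT
  have hjRa : j ∉ Ra := fun hjRa => hiθ ((mem_filter.1 (hRa hjRa)).2.le.trans hjθ)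
  exact ⟨j, mem_sdiff.2 ⟨mem_insert_of_mem hjVi, by simp [hjRa, hjRb]⟩, hjθ⟩

end ValidRemoved

noncomputable def strictSuperlevel {V : Type*} [Fintype V] (y : V → ℝ) (θ : ℝ) : Finset V :=
  univ.filter (fun j => θ < y j)

@[simp]
theorem mem_strictSuperlevel {V : Type*} [Fintype V] {y : V → ℝ} {θ : ℝ} {j : V} :
    j ∈ strictSuperlevel y θ ↔ θ < y j := by
  simp [strictSuperlevel]

section Robust

variable {V : Type*} [Fintype V] [DecidableEq V] {E : Finset (V × V)} {A S₁ S₂ T₁ T₂ : Finset V}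
  {r s : ℕ}

theorem reachSet_subset : reachSet E r S₁ ⊆ S₁ := filter_subset _ _

theorem RSRobust.exists_notMem_mem_reachSet (hrob : RSRobust E r s) (hA : #A < s)
    (hS : Disjoint S₁ S₂) (h₁ : (S₁ \ A).Nonempty) (h₂ : (S₂ \ A).Nonempty) :
    ∃ i ∉ A, i ∈ reachSet E r S₁ ∨ i ∈ reachSet E r S₂ := by
  obtain ⟨i₁, hi₁⟩ := h₁
  obtain ⟨i₂, hi₂⟩ := h₂
  rcases hrob S₁ S₂ ⟨i₁, (mem_sdiff.1 hi₁).1⟩ ⟨i₂, (mem_sdiff.1 hi₂).1⟩ hS with h | h | h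
  · have : reachSet E r S₁ = S₁ := eq_of_subset_of_card_le reachSet_subset h.ge
    exact ⟨i₁, (mem_sdiff.1 hi₁).2, Or.inl (this.symm ▸ (mem_sdiff.1 hi₁).1)⟩
  · have : reachSet E r S₂ = S₂ := eq_of_subset_of_card_le reachSet_subset h.ge
    exact ⟨i₂, (mem_sdiff.1 hi₂).2, Or.inr (this.symm ▸ (mem_sdiff.1 hi₂).1)⟩
  · have hcard : #A < #(reachSet E r S₁ ∪ reachSet E r S₂) := by
      rw [card_union_of_disjoint (hS.mono reachSet_subset reachSet_subset)]
      omega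
    obtain ⟨i, hi, hiA⟩ := exists_mem_notMem_of_card_lt_card hcard
    exact ⟨i, hiA, mem_union.1 hi⟩

theorem sdiff_subset_sdiff_of_reach (hT : ∀ i ∉ A, i ∉ S₁ ∨ i ∈ reachSet E r S₁ → i ∉ T₁) :
    T₁ \ A ⊆ S₁ \ A := fun i hi => by
  obtain ⟨hiT, hiA⟩ := mem_sdiff.1 hi
  exact mem_sdiff.2 ⟨by_contra fun hiS => hT i hiA (Or.inl hiS) hiT, hiA⟩

theorem sdiff_ssubset_sdiff_of_reach (hT : ∀ i ∉ A, i ∉ S₁ ∨ i ∈ reachSet E r S₁ → i ∉ T₁)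
    {i : V} (hiA : i ∉ A) (hi : i ∈ reachSet E r S₁) : T₁ \ A ⊂ S₁ \ A :=
  (ssubset_iff_of_subset (sdiff_subset_sdiff_of_reach hT)).2
    ⟨i, mem_sdiff.2 ⟨reachSet_subset hi, hiA⟩,
      fun hiT => hT i hiA (Or.inr hi) (mem_sdiff.1 hiT).1⟩

theorem card_sdiff_add_card_sdiff_lt (hrob : RSRobust E r s) (hA : #A < s)
    (hS : Disjoint S₁ S₂) (h₁ : (S₁ \ A).Nonempty) (h₂ : (S₂ \ A).Nonempty)
    (hT₁ : ∀ i ∉ A, i ∉ S₁ ∨ i ∈ reachSet E r S₁ → i ∉ T₁)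
    (hT₂ : ∀ i ∉ A, i ∉ S₂ ∨ i ∈ reachSet E r S₂ → i ∉ T₂) :
    #(T₁ \ A) + #(T₂ \ A) < #(S₁ \ A) + #(S₂ \ A) := by
  have hle₁ := card_le_card (sdiff_subset_sdiff_of_reach hT₁)
  have hle₂ := card_le_card (sdiff_subset_sdiff_of_reach hT₂)
  obtain ⟨i, hiA, hi | hi⟩ := hrob.exists_notMem_mem_reachSet hA hS h₁ h₂
  · have := card_lt_card (sdiff_ssubset_sdiff_of_reach hT₁ hiA hi)
    omega
  · have := card_lt_card (sdiff_ssubset_sdiff_of_reach hT₂ hiA hi)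
    omega

theorem card_sdiff_add_card_sdiff_le_card (hS : Disjoint S₁ S₂) :
    #(S₁ \ A) + #(S₂ \ A) ≤ Fintype.card V := by
  rw [← card_union_of_disjoint (hS.mono sdiff_subset sdiff_subset)]
  exact card_le_univ _

end Robust

section Arcp

variable {V : Type*} [Fintype V] [DecidableEq V] {E : Finset (V × V)} {A : Finset V} {F : ℕ}
  {α : ℝ} {x : ℕ → V → ℝ} {R : ℕ → V → Finset V} {w : ℕ → V → V → ℝ} {i : V} {t : ℕ}

theorem strictSuperlevel_sdiff_eq_empty_iff {y : V → ℝ} {θ : ℝ} :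
    strictSuperlevel y θ \ A = ∅ ↔ ∀ j ∉ A, y j ≤ θ := by
  simp only [eq_empty_iff_forall_notMem, mem_sdiff, mem_strictSuperlevel, not_and, not_not]
  exact forall_congr' fun j => by rw [← not_lt, not_imp_not]

theorem ArcpUpdate.neg (h : ArcpUpdate E F α x R w i t) : ArcpUpdate E F α (-x) R w i t := by
  obtain ⟨hR, hw, hsum, hx⟩ := h
  refine ⟨hR.neg, hw, hsum, ?_⟩
  simp only [Pi.neg_apply, hx, mul_neg, sum_neg_distrib]

theorem ArcpUpdate.le_mul_add_one_sub_mul (h : ArcpUpdate E F α x R w i t) (hα : 0 ≤ α)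
    (hA : #A ≤ F) (hi : i ∉ A) {B θ : ℝ} (hB : ∀ j ∉ A, x t j ≤ B) (hθB : θ ≤ B)
    (hθ : x t i ≤ θ ∨ F < #((inNbrs E i).filter (fun j => x t j ≤ θ))) :
    x (t + 1) i ≤ α * θ + (1 - α) * B := by
  obtain ⟨hR, hw, hsum, hx⟩ := h
  obtain ⟨j₀, hj₀, hj₀θ⟩ := hR.exists_mem_kept_le hθ
  rw [hx]
  exact sum_mul_le_mul_add_one_sub_mul hα hw hsum hj₀ (fun j hj => hR.le_of_mem_kept hA hi hB hj)
    hj₀θ hθB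

theorem ArcpUpdate.le_of_forall_le (h : ArcpUpdate E F α x R w i t) (hα : 0 ≤ α)
    (hA : #A ≤ F) (hi : i ∉ A) {B : ℝ} (hB : ∀ j ∉ A, x t j ≤ B) : x (t + 1) i ≤ B := by
  have := h.le_mul_add_one_sub_mul hα hA hi hB le_rfl (Or.inl (hB i hi))
  linarith

theorem ArcpUpdate.notMem_strictSuperlevel_succ (h : ArcpUpdate E F α x R w i t) (hα : 0 ≤ α)
    (hA : #A ≤ F) (hi : i ∉ A) {B ε : ℝ} (hB : ∀ j ∉ A, x t j ≤ B) (hε : 0 ≤ ε)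
    (hS : i ∉ strictSuperlevel (x t) (B - ε) ∨
      i ∈ reachSet E (F + 1) (strictSuperlevel (x t) (B - ε))) :
    i ∉ strictSuperlevel (x (t + 1)) (B - α * ε) := by
  have hθ : x t i ≤ B - ε ∨ F < #((inNbrs E i).filter (fun j => x t j ≤ B - ε)) := by
    have hfilter : inNbrs E i \ strictSuperlevel (x t) (B - ε) =
        (inNbrs E i).filter (fun j => x t j ≤ B - ε) := by
      ext j
      simp only [mem_sdiff, mem_filter, mem_strictSuperlevel, not_lt]
    rcases hS with hS | hS
    · exact Or.inl (not_lt.1 (mt mem_strictSuperlevel.2 hS))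
    · exact Or.inr (hfilter ▸ (mem_filter.1 hS).2)
  have := h.le_mul_add_one_sub_mul hα hA hi hB (by linarith) hθ
  simp only [mem_strictSuperlevel, not_lt]
  linarith

theorem arcp_forall_le_of_forall_le (hα : 0 ≤ α) (hA : #A ≤ F)
    (hupd : ∀ t, ∀ i ∉ A, ArcpUpdate E F α x R w i t) {s t : ℕ} (hst : s ≤ t) {B : ℝ}
    (hB : ∀ j ∉ A, x s j ≤ B) : ∀ j ∉ A, x t j ≤ B := by
  induction t, hst using Nat.le_induction with
  | base => exact hB
  | succ t _ ih => exact fun j hj => (hupd t j hj).le_of_forall_le hα hA hj ih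

theorem arcp_forall_ge_of_forall_ge (hα : 0 ≤ α) (hA : #A ≤ F)
    (hupd : ∀ t, ∀ i ∉ A, ArcpUpdate E F α x R w i t) {s t : ℕ} (hst : s ≤ t) {b : ℝ}
    (hb : ∀ j ∉ A, b ≤ x s j) : ∀ j ∉ A, b ≤ x t j := by
  have := arcp_forall_le_of_forall_le (x := -x) hα hA (fun t i hi => (hupd t i hi).neg) hst
    (B := -b) (fun j hj => neg_le_neg (hb j hj))
  exact fun j hj => neg_le_neg_iff.1 (this j hj)

theorem arcp_exists_forall_le_or_forall_ge (hα0 : 0 < α) (hα1 : α ≤ 1) (hA : #A ≤ F)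
    (hrob : RSRobust E (F + 1) (F + 1)) (hupd : ∀ t, ∀ i ∉ A, ArcpUpdate E F α x R w i t)
    {t₀ : ℕ} {b B : ℝ} (hbB : b ≤ B) (hb : ∀ j ∉ A, b ≤ x t₀ j) (hB : ∀ j ∉ A, x t₀ j ≤ B) :
    ∃ k ≤ Fintype.card V, (∀ j ∉ A, x (t₀ + k) j ≤ B - α ^ k * (B - b) / 2) ∨
      ∀ j ∉ A, b + α ^ k * (B - b) / 2 ≤ x (t₀ + k) j := by
  set ε : ℕ → ℝ := fun k => α ^ k * (B - b) / 2 with hε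
  have hε0 : ∀ k, 0 ≤ ε k := fun k => by positivity
  have hεle : ∀ k, 2 * ε k ≤ B - b := fun k => by
    have := mul_le_of_le_one_left (sub_nonneg.2 hbB) (pow_le_one₀ hα0.le hα1 (n := k))
    simp only [hε]
    linarith
  have hεsucc : ∀ k, ε (k + 1) = α * ε k := fun k => by simp only [hε, pow_succ]; ring
  -- `S₂ k` is the lower slice `{j | x (t₀ + k) j < b + ε k}`, written as an upper slice of `-x`
  set S₁ : ℕ → Finset V := fun k => strictSuperlevel (x (t₀ + k)) (B - ε k)
  set S₂ : ℕ → Finset V := fun k => strictSuperlevel ((-x) (t₀ + k)) (-b - ε k)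
  have hupd' : ∀ t, ∀ i ∉ A, ArcpUpdate E F α (-x) R w i t := fun t i hi => (hupd t i hi).neg
  have hshrink₁ : ∀ k, ∀ i ∉ A, i ∉ S₁ k ∨ i ∈ reachSet E (F + 1) (S₁ k) → i ∉ S₁ (k + 1) :=
    fun k i hi h => by
      show i ∉ strictSuperlevel (x (t₀ + k + 1)) (B - ε (k + 1))
      rw [hεsucc]
      exact (hupd (t₀ + k) i hi).notMem_strictSuperlevel_succ hα0.le hA hi
        (arcp_forall_le_of_forall_le hα0.le hA hupd (Nat.le_add_right t₀ k) hB) (hε0 k) h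
  have hshrink₂ : ∀ k, ∀ i ∉ A, i ∉ S₂ k ∨ i ∈ reachSet E (F + 1) (S₂ k) → i ∉ S₂ (k + 1) :=
    fun k i hi h => by
      show i ∉ strictSuperlevel ((-x) (t₀ + k + 1)) (-b - ε (k + 1))
      rw [hεsucc]
      exact (hupd' (t₀ + k) i hi).notMem_strictSuperlevel_succ hα0.le hA hi
        (arcp_forall_le_of_forall_le hα0.le hA hupd' (Nat.le_add_right t₀ k)
          fun j hj => neg_le_neg (hb j hj)) (hε0 k) h
  have hdisj : ∀ k, Disjoint (S₁ k) (S₂ k) := fun k => disjoint_left.2 fun j h₁ h₂ => by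
    simp only [S₁, S₂, mem_strictSuperlevel, Pi.neg_apply] at h₁ h₂
    linarith [hεle k]
  obtain ⟨k, hk, hstop⟩ := exists_le_not_of_lt (f := fun k => #(S₁ k \ A) + #(S₂ k \ A))
    (P := fun k => (S₁ k \ A).Nonempty ∧ (S₂ k \ A).Nonempty) fun k ⟨h₁, h₂⟩ =>
      card_sdiff_add_card_sdiff_lt hrob (by omega) (hdisj k) h₁ h₂ (hshrink₁ k) (hshrink₂ k)
  rw [not_and_or, not_nonempty_iff_eq_empty, not_nonempty_iff_eq_empty,
    strictSuperlevel_sdiff_eq_empty_iff, strictSuperlevel_sdiff_eq_empty_iff] at hstop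
  refine ⟨k, hk.trans (card_sdiff_add_card_sdiff_le_card (hdisj 0)), hstop.imp id fun h j hj => ?_⟩
  linarith [show -x (t₀ + k) j ≤ -b - ε k from h j hj, show ε k = α ^ k * (B - b) / 2 from rfl]

theorem arcp_contraction (hα0 : 0 < α) (hα1 : α ≤ 1) (hA : #A ≤ F)
    (hrob : RSRobust E (F + 1) (F + 1)) (hupd : ∀ t, ∀ i ∉ A, ArcpUpdate E F α x R w i t)
    {t₀ : ℕ} {b B : ℝ} (hbB : b ≤ B) (hb : ∀ j ∉ A, b ≤ x t₀ j) (hB : ∀ j ∉ A, x t₀ j ≤ B) :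
    (∀ j ∉ A, x (t₀ + Fintype.card V) j ≤ B - α ^ Fintype.card V * (B - b) / 2) ∨
      ∀ j ∉ A, b + α ^ Fintype.card V * (B - b) / 2 ≤ x (t₀ + Fintype.card V) j := by
  obtain ⟨k, hk, hslice⟩ := arcp_exists_forall_le_or_forall_ge hα0 hα1 hA hrob hupd hbB hb hB
  have hpow : α ^ Fintype.card V * (B - b) ≤ α ^ k * (B - b) :=
    mul_le_mul_of_nonneg_right (pow_le_pow_of_le_one hα0.le hα1 hk) (sub_nonneg.2 hbB)
  have hlater : t₀ + k ≤ t₀ + Fintype.card V := Nat.add_le_add_left hk t₀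
  rcases hslice with h | h
  · refine Or.inl fun j hj => ?_
    linarith [arcp_forall_le_of_forall_le hα0.le hA hupd hlater h j hj]
  · refine Or.inr fun j hj => ?_
    linarith [arcp_forall_ge_of_forall_ge hα0.le hA hupd hlater h j hj]

theorem arcp_antitone_sup' (hα : 0 ≤ α) (hA : #A ≤ F)
    (hupd : ∀ t, ∀ i ∉ A, ArcpUpdate E F α x R w i t) (hN : (univ \ A).Nonempty) :
    Antitone fun t => (univ \ A).sup' hN (x t) := fun s t hst =>
  sup'_le _ _ fun j hj => arcp_forall_le_of_forall_le hα hA hupd hst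
    (fun k hk => le_sup' (x s) (by simpa using hk)) j (by simpa using hj)

theorem arcp_monotone_inf' (hα : 0 ≤ α) (hA : #A ≤ F)
    (hupd : ∀ t, ∀ i ∉ A, ArcpUpdate E F α x R w i t) (hN : (univ \ A).Nonempty) :
    Monotone fun t => (univ \ A).inf' hN (x t) := fun s t hst =>
  le_inf' _ _ fun j hj => arcp_forall_ge_of_forall_ge hα hA hupd hst
    (fun k hk => inf'_le (x s) (by simpa using hk)) j (by simpa using hj)

theorem arcp_sup'_sub_inf'_le (hα0 : 0 < α) (hα1 : α ≤ 1) (hA : #A ≤ F)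
    (hrob : RSRobust E (F + 1) (F + 1)) (hupd : ∀ t, ∀ i ∉ A, ArcpUpdate E F α x R w i t)
    (hN : (univ \ A).Nonempty) (t : ℕ) :
    (univ \ A).sup' hN (x (t + Fintype.card V)) - (univ \ A).inf' hN (x (t + Fintype.card V)) ≤
      (1 - α ^ Fintype.card V / 2) * ((univ \ A).sup' hN (x t) - (univ \ A).inf' hN (x t)) := by
  have hM := arcp_antitone_sup' hα0.le hA hupd hN (Nat.le_add_right t (Fintype.card V))
  have hm := arcp_monotone_inf' hα0.le hA hupd hN (Nat.le_add_right t (Fintype.card V))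
  simp only at hM hm
  have hb : ∀ j ∉ A, (univ \ A).inf' hN (x t) ≤ x t j := fun j hj => inf'_le _ (by simpa using hj)
  have hB : ∀ j ∉ A, x t j ≤ (univ \ A).sup' hN (x t) := fun j hj => le_sup' _ (by simpa using hj)
  obtain ⟨j₀, hj₀⟩ := id hN
  rcases arcp_contraction hα0 hα1 hA hrob hupd (hb j₀ (by simpa using hj₀)
    |>.trans (hB j₀ (by simpa using hj₀))) hb hB with h | h
  · have := sup'_le hN (x (t + Fintype.card V)) fun j hj => h j (by simpa using hj)
    linarith
  · have := le_inf' hN (x (t + Fintype.card V)) fun j hj => h j (by simpa using hj)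
    linarith

end Arcp

theorem stmt9_general {V : Type*} [Fintype V] [DecidableEq V]
    (E : Finset (V × V))
    (A : Finset V) (hN : (Finset.univ \ A).Nonempty)
    (F : ℕ) (α : ℝ) (hα0 : 0 < α) (hα1 : α < 1)
    (hA : A.card ≤ F)
    (hrob : RSRobust E (F + 1) (F + 1))
    (x : ℕ → V → ℝ) (R : ℕ → V → Finset V) (w : ℕ → V → V → ℝ)
    (hupd : ∀ t : ℕ, ∀ i ∉ A, ArcpUpdate E F α x R w i t) :
    ∃ L : ℝ,
      (∀ i ∉ A, Filter.Tendsto (fun t => x t i) Filter.atTop (nhds L)) ∧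
      ∀ t : ℕ, ∀ i ∉ A,
        x t i ∈ Set.Icc ((Finset.univ \ A).inf' hN (x 0))
          ((Finset.univ \ A).sup' hN (x 0)) := by
  set M : ℕ → ℝ := fun t => (univ \ A).sup' hN (x t)
  set m : ℕ → ℝ := fun t => (univ \ A).inf' hN (x t)
  have hM : Antitone M := arcp_antitone_sup' hα0.le hA hupd hN
  have hm : Monotone m := arcp_monotone_inf' hα0.le hA hupd hN
  have hxM : ∀ t, ∀ i ∉ A, x t i ≤ M t := fun t i hi => le_sup' (x t) (by simpa using hi)
  have hmx : ∀ t, ∀ i ∉ A, m t ≤ x t i := fun t i hi => inf'_le (x t) (by simpa using hi)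
  obtain ⟨i₀, hi₀⟩ := hN
  have hmM : ∀ t, m t ≤ M t := fun t =>
    (hmx t i₀ (mem_sdiff.1 hi₀).2).trans (hxM t i₀ (mem_sdiff.1 hi₀).2)
  have hLM := tendsto_atTop_ciInf hM ⟨m 0, by rintro _ ⟨t, rfl⟩; exact (hm t.zero_le).trans (hmM t)⟩
  have hLm := tendsto_atTop_ciSup hm ⟨M 0, by rintro _ ⟨t, rfl⟩; exact (hmM t).trans (hM t.zero_le)⟩
  have hL : ⨅ t, M t = ⨆ t, m t := sub_eq_zero.1 <|
    eq_zero_of_tendsto_of_le_mul (hLM.sub hLm) (fun t => sub_nonneg.2 (hmM t))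
      (by linarith [pow_pos hα0 (Fintype.card V)])
      (arcp_sup'_sub_inf'_le hα0 hα1.le hA hrob hupd _)
  refine ⟨⨅ t, M t, fun i hi => ?_, fun t i hi => ⟨?_, ?_⟩⟩
  · exact tendsto_of_tendsto_of_tendsto_of_le_of_le (hL ▸ hLm) hLM (hmx · i hi) (hxM · i hi)
  · exact (hm t.zero_le).trans (hmx t i hi)
  · exact (hxM t i hi).trans (hM t.zero_le)

/-- Sufficiency for the `F`-total malicious model: on a time-invariant
`(F+1,F+1)`-robust digraph, if each normal node runs discrete-time ARC-P with parameter
`F` and the malicious adversary set `A` satisfies `|A| ≤ F`, then the normal nodes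
achieve resilient asymptotic consensus: they all converge to a common limit `L`, and
every normal value stays in `[m[0], M[0]]` for all time, for any initial values, any
valid weights and removed sets, and any adversary value trajectories. -/
theorem stmt9 {V : Type*} [Fintype V] [DecidableEq V]
    (hn : 2 ≤ Fintype.card V)
    (E : Finset (V × V)) (hsimple : ∀ i : V, (i, i) ∉ E)
    (A : Finset V) (hN : (Finset.univ \ A).Nonempty)
    (F : ℕ) (α : ℝ) (hα0 : 0 < α) (hα1 : α < 1)
    (hA : A.card ≤ F)
    (hrob : RSRobust E (F + 1) (F + 1))
    (x : ℕ → V → ℝ) (R : ℕ → V → Finset V) (w : ℕ → V → V → ℝ)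
    (hupd : ∀ t : ℕ, ∀ i ∉ A, ArcpUpdate E F α x R w i t) :
    ∃ L : ℝ,
      (∀ i ∉ A, Filter.Tendsto (fun t => x t i) Filter.atTop (nhds L)) ∧
      ∀ t : ℕ, ∀ i ∉ A,
        x t i ∈ Set.Icc ((Finset.univ \ A).inf' hN (x 0))
          ((Finset.univ \ A).sup' hN (x 0)) :=
  stmt9_general E A hN F α hα0 hα1 hA hrob x R w hupd
end

section
/- Consider a time-invariant digraph D = (V, E) on n ≥ 2 nodes that is NOT (F+1,F+1)-robust. Then there exist two nonempty disjoint subsets S1, S2 ⊆ V, an F-totally bounded set A ⊆ V of malicious nodes (namely A = X_{S_1} ∪ X_{S_2}, whose size is at most F) that keep their values constant, and initial values a for all nodes of S1, b for all nodes of S2 with a < b, and values in (a,b) for all other nodes, such that under discrete-time ARC-P with parameter F (for any valid weight sequences) some normal node in S1 keeps the value a for all time and some normal node in S2 keeps the value b for all time; hence the normal nodes do not reach asymptotic consensus. -/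
/-- Necessity for the `F`-total malicious model: if a time-invariant digraph on `n ≥ 2`
nodes is not `(F+1,F+1)`-robust, then there are nonempty disjoint sets `S1`, `S2` such
that, taking the malicious set `A = X_{S1} ∪ X_{S2}` (of size at most `F`) with constant
values, initial values `a` on `S1`, `b` on `S2` (`a < b`) and in `(a,b)` elsewhere, under
ARC-P with parameter `F` some normal node of `S1` keeps the value `a` forever and some
normal node of `S2` keeps the value `b` forever; hence the normal nodes do not reach
asymptotic consensus. -/
theorem stmt10 {V : Type*} [Fintype V] [DecidableEq V]
    (hn : 2 ≤ Fintype.card V)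
    (E : Finset (V × V)) (hsimple : ∀ i : V, (i, i) ∉ E)
    (F : ℕ) (α : ℝ) (hα0 : 0 < α) (hα1 : α < 1)
    (hnrob : ¬ RSRobust E (F + 1) (F + 1)) :
    ∃ S1 S2 : Finset V, S1.Nonempty ∧ S2.Nonempty ∧ Disjoint S1 S2 ∧
      (reachSet E (F + 1) S1 ∪ reachSet E (F + 1) S2).card ≤ F ∧
      ∀ a b : ℝ, a < b →
        ∀ (x : ℕ → V → ℝ) (R : ℕ → V → Finset V) (w : ℕ → V → V → ℝ),
          (∀ i ∈ S1, x 0 i = a) →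
          (∀ i ∈ S2, x 0 i = b) →
          (∀ i ∈ Finset.univ \ (S1 ∪ S2), x 0 i ∈ Set.Ioo a b) →
          -- the malicious nodes keep their values constant
          (∀ t : ℕ, ∀ i ∈ reachSet E (F + 1) S1 ∪ reachSet E (F + 1) S2,
            x (t + 1) i = x t i) →
          -- the normal nodes run ARC-P with parameter F
          (∀ t : ℕ, ∀ i, i ∉ reachSet E (F + 1) S1 ∪ reachSet E (F + 1) S2 →
            ArcpUpdate E F α x R w i t) →
          (∃ i ∈ S1 \ (reachSet E (F + 1) S1 ∪ reachSet E (F + 1) S2),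
            ∀ t : ℕ, x t i = a) ∧
          (∃ j ∈ S2 \ (reachSet E (F + 1) S1 ∪ reachSet E (F + 1) S2),
            ∀ t : ℕ, x t j = b) ∧
          ¬ ∃ L : ℝ, ∀ i ∉ reachSet E (F + 1) S1 ∪ reachSet E (F + 1) S2,
              Filter.Tendsto (fun t => x t i) Filter.atTop (nhds L) := by
  unfold RSRobust at hnrob
  push_neg at hnrob
  obtain ⟨S1, S2, h1ne, h2ne, hdisj, hc1, hc2, hc3⟩ := hnrob
  have hsub1 : reachSet E (F+1) S1 ⊆ S1 := Finset.filter_subset _ _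
  have hsub2 : reachSet E (F+1) S2 ⊆ S2 := Finset.filter_subset _ _
  refine ⟨S1, S2, h1ne, h2ne, hdisj, ?_, ?_⟩
  · have := Finset.card_union_le (reachSet E (F+1) S1) (reachSet E (F+1) S2)
    omega
  intro a b hab x R w hx1 hx2 hx3 hmal hupd
  set A := reachSet E (F + 1) S1 ∪ reachSet E (F + 1) S2 with hA
  -- the key invariant
  have key : ∀ t, (∀ i, a ≤ x t i ∧ x t i ≤ b) ∧ (∀ i ∈ S1, x t i = a) ∧
      (∀ i ∈ S2, x t i = b) := by
    intro t
    induction t with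
    | zero =>
      refine ⟨?_, hx1, hx2⟩
      intro i
      by_cases h1' : i ∈ S1
      · rw [hx1 i h1']; exact ⟨le_refl a, hab.le⟩
      by_cases h2' : i ∈ S2
      · rw [hx2 i h2']; exact ⟨hab.le, le_refl b⟩
      · have := hx3 i (by simp [h1', h2'])
        exact ⟨this.1.le, this.2.le⟩
    | succ t IH =>
      obtain ⟨hbd, hS1, hS2⟩ := IH
      have step : ∀ i, (a ≤ x (t+1) i ∧ x (t+1) i ≤ b) ∧ (i ∈ S1 → x (t+1) i = a) ∧
          (i ∈ S2 → x (t+1) i = b) := by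
        intro i
        by_cases hiA : i ∈ A
        · rw [hmal t i hiA]
          exact ⟨hbd i, fun h => hS1 i h, fun h => hS2 i h⟩
        · obtain ⟨⟨Ra, Rb, hR, hRa1, hRa2, hRb1, hRb2⟩, hwα, hwsum, hxeq⟩ := hupd t i hiA
          set K := (insert i (inNbrs E i)) \ R t i with hK
          have hwpos : ∀ j ∈ K, (0:ℝ) ≤ w t i j := fun j hj => (hα0.trans_le (hwα j hj)).le
          have hlow : a ≤ x (t+1) i := by
            rw [hxeq]
            calc a = ∑ j ∈ K, w t i j * a := by rw [← Finset.sum_mul, hwsum, one_mul]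
            _ ≤ ∑ j ∈ K, w t i j * x t j :=
              Finset.sum_le_sum (fun j hj =>
                mul_le_mul_of_nonneg_left (hbd j).1 (hwpos j hj))
          have hhigh : x (t+1) i ≤ b := by
            rw [hxeq]
            calc ∑ j ∈ K, w t i j * x t j ≤ ∑ j ∈ K, w t i j * b :=
              Finset.sum_le_sum (fun j hj =>
                mul_le_mul_of_nonneg_left (hbd j).2 (hwpos j hj))
            _ = b := by rw [← Finset.sum_mul, hwsum, one_mul]
          refine ⟨⟨hlow, hhigh⟩, ?_, ?_⟩
          · -- i ∈ S1
            intro hiS1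
            have hnX : i ∉ reachSet E (F+1) S1 := fun h => hiA (Finset.mem_union_left _ h)
            simp only [reachSet, Finset.mem_filter, hiS1, true_and, not_le] at hnX
            have hcard : (inNbrs E i \ S1).card ≤ F := Nat.lt_succ_iff.mp hnX
            have hia : x t i = a := hS1 i hiS1
            have hFl : (inNbrs E i).filter (fun j => x t i < x t j) ⊆ inNbrs E i \ S1 := by
              intro j hj
              rw [Finset.mem_filter] at hj
              rw [Finset.mem_sdiff]
              refine ⟨hj.1, fun hjS1 => ?_⟩
              have := hS1 j hjS1
              rw [hia, this] at hj
              exact lt_irrefl a hj.2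
            have hFlcard : ((inNbrs E i).filter (fun j => x t i < x t j)).card ≤ F :=
              (Finset.card_le_card hFl).trans hcard
            have hRaeq : Ra = (inNbrs E i).filter (fun j => x t i < x t j) := by
              rcases hRa2 with ⟨heq, _⟩ | ⟨hcF, _⟩
              · exact heq
              · exact Finset.eq_of_subset_of_card_le hRa1 (hFlcard.trans_eq hcF.symm)
            have hkept : ∀ j ∈ K, x t j = a := by
              intro j hj
              rw [hK, Finset.mem_sdiff, Finset.mem_insert] at hj
              obtain ⟨hj1, hj2⟩ := hj
              rcases hj1 with rfl | hjV
              · exact hia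
              · have hnotRa : j ∉ Ra := fun h => hj2 (hR ▸ Finset.mem_union_left _ h)
                rw [hRaeq] at hnotRa
                have hnlt : ¬ (x t i < x t j) := fun h =>
                  hnotRa (Finset.mem_filter.2 ⟨hjV, h⟩)
                have h1 := (hbd j).1
                rw [hia] at hnlt
                linarith [not_lt.mp hnlt]
            rw [hxeq]
            calc ∑ j ∈ K, w t i j * x t j = ∑ j ∈ K, w t i j * a :=
              Finset.sum_congr rfl (fun j hj => by rw [hkept j hj])
            _ = a := by rw [← Finset.sum_mul, hwsum, one_mul]
          · -- i ∈ S2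
            intro hiS2
            have hnX : i ∉ reachSet E (F+1) S2 := fun h => hiA (Finset.mem_union_right _ h)
            simp only [reachSet, Finset.mem_filter, hiS2, true_and, not_le] at hnX
            have hcard : (inNbrs E i \ S2).card ≤ F := Nat.lt_succ_iff.mp hnX
            have hib : x t i = b := hS2 i hiS2
            have hFl : (inNbrs E i).filter (fun j => x t j < x t i) ⊆ inNbrs E i \ S2 := by
              intro j hj
              rw [Finset.mem_filter] at hj
              rw [Finset.mem_sdiff]
              refine ⟨hj.1, fun hjS2 => ?_⟩
              have := hS2 j hjS2
              rw [hib, this] at hj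
              exact lt_irrefl b hj.2
            have hFlcard : ((inNbrs E i).filter (fun j => x t j < x t i)).card ≤ F :=
              (Finset.card_le_card hFl).trans hcard
            have hRbeq : Rb = (inNbrs E i).filter (fun j => x t j < x t i) := by
              rcases hRb2 with ⟨heq, _⟩ | ⟨hcF, _⟩
              · exact heq
              · exact Finset.eq_of_subset_of_card_le hRb1 (hFlcard.trans_eq hcF.symm)
            have hkept : ∀ j ∈ K, x t j = b := by
              intro j hj
              rw [hK, Finset.mem_sdiff, Finset.mem_insert] at hj
              obtain ⟨hj1, hj2⟩ := hj
              rcases hj1 with rfl | hjV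
              · exact hib
              · have hnotRb : j ∉ Rb := fun h => hj2 (hR ▸ Finset.mem_union_right _ h)
                rw [hRbeq] at hnotRb
                have hnlt : ¬ (x t j < x t i) := fun h =>
                  hnotRb (Finset.mem_filter.2 ⟨hjV, h⟩)
                have h2 := (hbd j).2
                rw [hib] at hnlt
                linarith [not_lt.mp hnlt]
            rw [hxeq]
            calc ∑ j ∈ K, w t i j * x t j = ∑ j ∈ K, w t i j * b :=
              Finset.sum_congr rfl (fun j hj => by rw [hkept j hj])
            _ = b := by rw [← Finset.sum_mul, hwsum, one_mul]
      exact ⟨fun i => (step i).1, fun i h => (step i).2.1 h, fun i h => (step i).2.2 h⟩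
  -- find normal nodes in S1, S2
  have hni : ∃ i ∈ S1 \ A, True := by
    have hlt : (reachSet E (F+1) S1).card < S1.card :=
      lt_of_le_of_ne (Finset.card_le_card hsub1) hc1
    have : (S1 \ reachSet E (F+1) S1).Nonempty := by
      rw [Finset.sdiff_nonempty]
      intro hsub
      exact absurd (le_antisymm (Finset.card_le_card hsub1) (Finset.card_le_card hsub))
        (ne_of_lt hlt)
    obtain ⟨i, hi⟩ := this
    rw [Finset.mem_sdiff] at hi
    refine ⟨i, Finset.mem_sdiff.2 ⟨hi.1, fun hiA => ?_⟩, trivial⟩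
    rcases Finset.mem_union.mp hiA with h | h
    · exact hi.2 h
    · exact (Finset.disjoint_left.mp hdisj hi.1) (hsub2 h)
  have hnj : ∃ j ∈ S2 \ A, True := by
    have hlt : (reachSet E (F+1) S2).card < S2.card :=
      lt_of_le_of_ne (Finset.card_le_card hsub2) hc2
    have : (S2 \ reachSet E (F+1) S2).Nonempty := by
      rw [Finset.sdiff_nonempty]
      intro hsub
      exact absurd (le_antisymm (Finset.card_le_card hsub2) (Finset.card_le_card hsub))
        (ne_of_lt hlt)
    obtain ⟨j, hj⟩ := this
    rw [Finset.mem_sdiff] at hj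
    refine ⟨j, Finset.mem_sdiff.2 ⟨hj.1, fun hjA => ?_⟩, trivial⟩
    rcases Finset.mem_union.mp hjA with h | h
    · exact (Finset.disjoint_right.mp hdisj hj.1) (hsub1 h)
    · exact hj.2 h
  obtain ⟨i, hi, -⟩ := hni
  obtain ⟨j, hj, -⟩ := hnj
  have hiS1 := (Finset.mem_sdiff.mp hi).1
  have hiA := (Finset.mem_sdiff.mp hi).2
  have hjS2 := (Finset.mem_sdiff.mp hj).1
  have hjA := (Finset.mem_sdiff.mp hj).2
  have hxa : ∀ t, x t i = a := fun t => (key t).2.1 i hiS1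
  have hxb : ∀ t, x t j = b := fun t => (key t).2.2 j hjS2
  refine ⟨⟨i, hi, hxa⟩, ⟨j, hj, hxb⟩, ?_⟩
  rintro ⟨L, hL⟩
  have hLi := hL i hiA
  have hLj := hL j hjA
  have hfa : (fun t => x t i) = fun _ => a := funext hxa
  have hfb : (fun t => x t j) = fun _ => b := funext hxb
  rw [hfa] at hLi
  rw [hfb] at hLj
  have hLa : L = a := (tendsto_nhds_unique hLi tendsto_const_nhds).symm.symm
  have hLb : L = b := tendsto_nhds_unique hLj tendsto_const_nhds
  rw [tendsto_nhds_unique hLi tendsto_const_nhds] at hLb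
  exact absurd hLb (ne_of_lt hab)
end

section
/- Consider a time-varying digraph D[t] = (V, E[t]) in which each normal node updates its value according to discrete-time ARC-P with parameter F, and suppose the set of malicious adversary nodes is F-totally bounded. If there exists t0 ≥ 0 such that D[t] is (F+1,F+1)-robust for all t ≥ t0, then the normal nodes achieve resilient asymptotic consensus: there exists L ∈ ℝ with lim_{t→∞} x_i[t] = L for every normal node i, and x_i[t] ∈ [m[0], M[0]] for all t and all normal i. -/
set_option linter.unusedSectionVars false
section Aux
variable {V : Type*} [Fintype V] [DecidableEq V]

lemma keep_le {E : Finset (V × V)} {F : ℕ} {A : Finset V} (hA : A.card ≤ F)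
    {xt : V → ℝ} {i : V} (hi : i ∉ A) {R : Finset V}
    (hR : ValidRemoved (inNbrs E i) xt i F R)
    {B : ℝ} (hB : ∀ k ∉ A, xt k ≤ B) :
    ∀ j ∈ (insert i (inNbrs E i)) \ R, xt j ≤ B := by
  intro j hj
  by_contra hc
  push_neg at hc
  obtain ⟨Ra, Rb, hRe, hRaSub, hRaCase, hRbSub, hRbCase⟩ := hR
  have hji : xt i < xt j := lt_of_le_of_lt (hB i hi) hc
  rw [Finset.mem_sdiff] at hj
  have hjV : j ∈ inNbrs E i := by
    rcases Finset.mem_insert.mp hj.1 with h | h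
    · exact absurd (h ▸ hji) (lt_irrefl _)
    · exact h
  have hjf : j ∈ (inNbrs E i).filter (fun k => xt i < xt k) :=
    Finset.mem_filter.mpr ⟨hjV, hji⟩
  have hjR : j ∉ Ra := fun h => hj.2 (hRe ▸ Finset.mem_union_left _ h)
  rcases hRaCase with ⟨hEq, _⟩ | ⟨hcard, hmax⟩
  · exact hjR (hEq ▸ hjf)
  · have hsubA : insert j Ra ⊆ A := by
      intro a ha
      rcases Finset.mem_insert.mp ha with rfl | ha
      · by_contra haA; exact absurd (hB a haA) (not_le.mpr hc)
      · by_contra haA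
        have h2 := hmax a ha j (Finset.mem_sdiff.mpr ⟨hjf, hjR⟩)
        exact absurd (hB a haA) (not_le.mpr (lt_of_lt_of_le hc h2))
    have h3 := Finset.card_le_card hsubA
    rw [Finset.card_insert_of_notMem hjR, hcard] at h3
    omega

lemma keep_ge {E : Finset (V × V)} {F : ℕ} {A : Finset V} (hA : A.card ≤ F)
    {xt : V → ℝ} {i : V} (hi : i ∉ A) {R : Finset V}
    (hR : ValidRemoved (inNbrs E i) xt i F R)
    {B : ℝ} (hB : ∀ k ∉ A, B ≤ xt k) :
    ∀ j ∈ (insert i (inNbrs E i)) \ R, B ≤ xt j := by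
  intro j hj
  by_contra hc
  push_neg at hc
  obtain ⟨Ra, Rb, hRe, hRaSub, hRaCase, hRbSub, hRbCase⟩ := hR
  have hji : xt j < xt i := lt_of_lt_of_le hc (hB i hi)
  rw [Finset.mem_sdiff] at hj
  have hjV : j ∈ inNbrs E i := by
    rcases Finset.mem_insert.mp hj.1 with h | h
    · exact absurd (h ▸ hji) (lt_irrefl _)
    · exact h
  have hjf : j ∈ (inNbrs E i).filter (fun k => xt k < xt i) :=
    Finset.mem_filter.mpr ⟨hjV, hji⟩
  have hjR : j ∉ Rb := fun h => hj.2 (hRe ▸ Finset.mem_union_right _ h)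
  rcases hRbCase with ⟨hEq, _⟩ | ⟨hcard, hmin⟩
  · exact hjR (hEq ▸ hjf)
  · have hsubA : insert j Rb ⊆ A := by
      intro a ha
      rcases Finset.mem_insert.mp ha with rfl | ha
      · by_contra haA; exact absurd (hB a haA) (not_le.mpr hc)
      · by_contra haA
        have h2 := hmin a ha j (Finset.mem_sdiff.mpr ⟨hjf, hjR⟩)
        exact absurd (hB a haA) (not_le.mpr (lt_of_le_of_lt h2 hc))
    have h3 := Finset.card_le_card hsubA
    rw [Finset.card_insert_of_notMem hjR, hcard] at h3
    omega

lemma avg_le {s : Finset V} {w xt : V → ℝ}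
    (hw : ∀ j ∈ s, 0 ≤ w j) (hsum : ∑ j ∈ s, w j = 1) {B : ℝ}
    (hB : ∀ j ∈ s, xt j ≤ B) : ∑ j ∈ s, w j * xt j ≤ B := by
  calc ∑ j ∈ s, w j * xt j ≤ ∑ j ∈ s, w j * B :=
        Finset.sum_le_sum (fun j hj => mul_le_mul_of_nonneg_left (hB j hj) (hw j hj))
    _ = B := by rw [← Finset.sum_mul, hsum, one_mul]

lemma avg_ge {s : Finset V} {w xt : V → ℝ}
    (hw : ∀ j ∈ s, 0 ≤ w j) (hsum : ∑ j ∈ s, w j = 1) {B : ℝ}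
    (hB : ∀ j ∈ s, B ≤ xt j) : B ≤ ∑ j ∈ s, w j * xt j := by
  calc B = ∑ j ∈ s, w j * B := by rw [← Finset.sum_mul, hsum, one_mul]
    _ ≤ ∑ j ∈ s, w j * xt j :=
        Finset.sum_le_sum (fun j hj => mul_le_mul_of_nonneg_left (hB j hj) (hw j hj))

lemma avg_contract {s : Finset V} {w xt : V → ℝ} {α B C : ℝ} (hα : 0 ≤ α)
    (hw : ∀ j ∈ s, α ≤ w j) (hsum : ∑ j ∈ s, w j = 1)
    {j0 : V} (hj0 : j0 ∈ s) (hC : xt j0 ≤ C) (hCB : C ≤ B)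
    (hB : ∀ j ∈ s, xt j ≤ B) :
    ∑ j ∈ s, w j * xt j ≤ α * C + (1 - α) * B := by
  have hw0 : ∀ j ∈ s, 0 ≤ w j := fun j hj => le_trans hα (hw j hj)
  have hsplit : ∑ j ∈ s, w j * xt j = w j0 * xt j0 + ∑ j ∈ s.erase j0, w j * xt j :=
    (Finset.add_sum_erase s (fun j => w j * xt j) hj0).symm
  have hsplitw : w j0 + ∑ j ∈ s.erase j0, w j = 1 := by
    rw [Finset.add_sum_erase s w hj0]; exact hsum
  have h1 : ∑ j ∈ s.erase j0, w j * xt j ≤ (∑ j ∈ s.erase j0, w j) * B := by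
    rw [Finset.sum_mul]
    exact Finset.sum_le_sum fun j hj =>
      mul_le_mul_of_nonneg_left (hB j (Finset.mem_of_mem_erase hj))
        (hw0 j (Finset.mem_of_mem_erase hj))
  have h2 : w j0 * xt j0 ≤ w j0 * C := mul_le_mul_of_nonneg_left hC (hw0 j0 hj0)
  have hS : ∑ j ∈ s.erase j0, w j = 1 - w j0 := by linarith
  rw [hS] at h1
  nlinarith [mul_nonneg (sub_nonneg.mpr (hw j0 hj0)) (sub_nonneg.mpr hCB)]

lemma avg_contract_ge {s : Finset V} {w xt : V → ℝ} {α B C : ℝ} (hα : 0 ≤ α)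
    (hw : ∀ j ∈ s, α ≤ w j) (hsum : ∑ j ∈ s, w j = 1)
    {j0 : V} (hj0 : j0 ∈ s) (hC : C ≤ xt j0) (hCB : B ≤ C)
    (hB : ∀ j ∈ s, B ≤ xt j) :
    α * C + (1 - α) * B ≤ ∑ j ∈ s, w j * xt j := by
  have hw0 : ∀ j ∈ s, 0 ≤ w j := fun j hj => le_trans hα (hw j hj)
  have hsplit : ∑ j ∈ s, w j * xt j = w j0 * xt j0 + ∑ j ∈ s.erase j0, w j * xt j :=
    (Finset.add_sum_erase s (fun j => w j * xt j) hj0).symm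
  have hsplitw : w j0 + ∑ j ∈ s.erase j0, w j = 1 := by
    rw [Finset.add_sum_erase s w hj0]; exact hsum
  have h1 : (∑ j ∈ s.erase j0, w j) * B ≤ ∑ j ∈ s.erase j0, w j * xt j := by
    rw [Finset.sum_mul]
    exact Finset.sum_le_sum fun j hj =>
      mul_le_mul_of_nonneg_left (hB j (Finset.mem_of_mem_erase hj))
        (hw0 j (Finset.mem_of_mem_erase hj))
  have h2 : w j0 * C ≤ w j0 * xt j0 := mul_le_mul_of_nonneg_left hC (hw0 j0 hj0)
  have hS : ∑ j ∈ s.erase j0, w j = 1 - w j0 := by linarith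
  rw [hS] at h1
  nlinarith [mul_nonneg (sub_nonneg.mpr (hw j0 hj0)) (sub_nonneg.mpr hCB)]

lemma exists_kept_le {E : Finset (V × V)} {F : ℕ} {xt : V → ℝ} {i : V} {R : Finset V}
    (hR : ValidRemoved (inNbrs E i) xt i F R)
    {T : Finset V} (hT : F + 1 ≤ T.card) (hTsub : T ⊆ inNbrs E i)
    {C : ℝ} (hTC : ∀ k ∈ T, xt k ≤ C) (hiC : C < xt i) :
    ∃ j ∈ (insert i (inNbrs E i)) \ R, xt j ≤ C := by
  obtain ⟨Ra, Rb, hRe, hRaSub, _, hRbSub, hRbCase⟩ := hR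
  have hRbF : Rb.card ≤ F := by rcases hRbCase with ⟨_, h⟩ | ⟨h, _⟩; exacts [h, h.le]
  have hne : (T \ Rb).Nonempty := by
    rw [← Finset.card_pos]
    have := Finset.le_card_sdiff Rb T
    omega
  obtain ⟨j, hj⟩ := hne
  rw [Finset.mem_sdiff] at hj
  refine ⟨j, ?_, hTC j hj.1⟩
  rw [Finset.mem_sdiff]
  refine ⟨Finset.mem_insert_of_mem (hTsub hj.1), ?_⟩
  rw [hRe, Finset.mem_union]
  rintro (h | h)
  · have h2 := (Finset.mem_filter.mp (hRaSub h)).2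
    exact absurd (hTC j hj.1) (not_le.mpr (lt_trans hiC h2))
  · exact hj.2 h

lemma exists_kept_ge {E : Finset (V × V)} {F : ℕ} {xt : V → ℝ} {i : V} {R : Finset V}
    (hR : ValidRemoved (inNbrs E i) xt i F R)
    {T : Finset V} (hT : F + 1 ≤ T.card) (hTsub : T ⊆ inNbrs E i)
    {C : ℝ} (hTC : ∀ k ∈ T, C ≤ xt k) (hiC : xt i < C) :
    ∃ j ∈ (insert i (inNbrs E i)) \ R, C ≤ xt j := by
  obtain ⟨Ra, Rb, hRe, hRaSub, hRaCase, hRbSub, _⟩ := hR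
  have hRaF : Ra.card ≤ F := by rcases hRaCase with ⟨_, h⟩ | ⟨h, _⟩; exacts [h, h.le]
  have hne : (T \ Ra).Nonempty := by
    rw [← Finset.card_pos]
    have := Finset.le_card_sdiff Ra T
    omega
  obtain ⟨j, hj⟩ := hne
  rw [Finset.mem_sdiff] at hj
  refine ⟨j, ?_, hTC j hj.1⟩
  rw [Finset.mem_sdiff]
  refine ⟨Finset.mem_insert_of_mem (hTsub hj.1), ?_⟩
  rw [hRe, Finset.mem_union]
  rintro (h | h)
  · exact hj.2 h
  · have h2 := (Finset.mem_filter.mp (hRbSub h)).2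
    exact absurd (hTC j hj.1) (not_le.mpr (lt_trans h2 hiC))

end Aux

/-- Time-varying sufficiency for the `F`-total malicious model: if the time-varying
digraph `E t` is `(F+1,F+1)`-robust for all `t ≥ t0` (for some `t0`), each normal node
runs discrete-time ARC-P with parameter `F`, and the malicious adversary set `A`
satisfies `|A| ≤ F`, then the normal nodes achieve resilient asymptotic consensus. -/
theorem stmt12 {V : Type*} [Fintype V] [DecidableEq V]
    (hn : 2 ≤ Fintype.card V)
    (E : ℕ → Finset (V × V)) (hsimple : ∀ t : ℕ, ∀ i : V, (i, i) ∉ E t)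
    (A : Finset V) (hN : (Finset.univ \ A).Nonempty)
    (F : ℕ) (α : ℝ) (hα0 : 0 < α) (hα1 : α < 1)
    (hA : A.card ≤ F)
    (hrob : ∃ t0 : ℕ, ∀ t ≥ t0, RSRobust (E t) (F + 1) (F + 1))
    (x : ℕ → V → ℝ) (R : ℕ → V → Finset V) (w : ℕ → V → V → ℝ)
    (hupd : ∀ t : ℕ, ∀ i ∉ A, ArcpUpdate (E t) F α x R w i t) :
    ∃ L : ℝ,
      (∀ i ∉ A, Filter.Tendsto (fun t => x t i) Filter.atTop (nhds L)) ∧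
      ∀ t : ℕ, ∀ i ∉ A,
        x t i ∈ Set.Icc ((Finset.univ \ A).inf' hN (x 0))
          ((Finset.univ \ A).sup' hN (x 0)) := by
  classical
  obtain ⟨t0, hrob⟩ := hrob
  set N : Finset V := Finset.univ \ A with hNdef
  have hNmem : ∀ i : V, i ∈ N ↔ i ∉ A := by
    intro i; simp [hNdef]
  set M : ℕ → ℝ := fun t => N.sup' hN (x t) with hMdef
  set m : ℕ → ℝ := fun t => N.inf' hN (x t) with hmdef
  have hα0' : (0:ℝ) ≤ α := le_of_lt hα0
  -- the node itself is always kept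
  have hkeep : ∀ t : ℕ, ∀ i ∉ A, i ∈ (insert i (inNbrs (E t) i)) \ R t i := by
    intro t i hi
    obtain ⟨⟨Ra, Rb, hRe, hRaSub, _, hRbSub, _⟩, _, _, _⟩ := hupd t i hi
    rw [Finset.mem_sdiff]
    refine ⟨Finset.mem_insert_self i _, ?_⟩
    rw [hRe, Finset.mem_union]
    rintro (h | h)
    · have h2 := (Finset.mem_filter.mp (hRaSub h)).1
      rw [inNbrs, Finset.mem_filter] at h2
      exact hsimple t i h2.2
    · have h2 := (Finset.mem_filter.mp (hRbSub h)).1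
      rw [inNbrs, Finset.mem_filter] at h2
      exact hsimple t i h2.2
  -- monotonicity of the extremes over normal values
  have hstep_le : ∀ t : ℕ, ∀ i ∉ A, ∀ B : ℝ, (∀ k ∉ A, x t k ≤ B) → x (t+1) i ≤ B := by
    intro t i hi B hB
    obtain ⟨hval, hw, hsum, hxeq⟩ := hupd t i hi
    rw [hxeq]
    exact avg_le (fun j hj => le_trans hα0' (hw j hj)) hsum (keep_le hA hi hval hB)
  have hstep_ge : ∀ t : ℕ, ∀ i ∉ A, ∀ B : ℝ, (∀ k ∉ A, B ≤ x t k) → B ≤ x (t+1) i := by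
    intro t i hi B hB
    obtain ⟨hval, hw, hsum, hxeq⟩ := hupd t i hi
    rw [hxeq]
    exact avg_ge (fun j hj => le_trans hα0' (hw j hj)) hsum (keep_ge hA hi hval hB)
  have hxleM : ∀ t : ℕ, ∀ k ∉ A, x t k ≤ M t := by
    intro t k hk; exact Finset.le_sup' (x t) ((hNmem k).mpr hk)
  have hmlex : ∀ t : ℕ, ∀ k ∉ A, m t ≤ x t k := by
    intro t k hk; exact Finset.inf'_le (x t) ((hNmem k).mpr hk)
  have hMantistep : ∀ t : ℕ, M (t+1) ≤ M t := by
    intro t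
    exact Finset.sup'_le _ _ (fun i hi => hstep_le t i ((hNmem i).mp hi) (M t) (hxleM t))
  have hmmonostep : ∀ t : ℕ, m t ≤ m (t+1) := by
    intro t
    exact Finset.le_inf' _ _ (fun i hi => hstep_ge t i ((hNmem i).mp hi) (m t) (hmlex t))
  have hManti : Antitone M := antitone_nat_of_succ_le hMantistep
  have hmmono : Monotone m := monotone_nat_of_le_succ hmmonostep
  have hmleM : ∀ t : ℕ, m t ≤ M t := by
    intro t
    obtain ⟨i, hi⟩ := hN
    exact le_trans (Finset.inf'_le _ hi) (Finset.le_sup' _ hi)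
  have hbdd : ∀ s t : ℕ, m s ≤ M t := fun s t =>
    le_trans (hmmono (le_max_left s t))
      (le_trans (hmleM _) (hManti (le_max_right s t)))
  have hbb : BddBelow (Set.range M) := by
    refine ⟨m 0, ?_⟩; rintro y ⟨t, rfl⟩; exact hbdd 0 t
  have hba : BddAbove (Set.range m) := by
    refine ⟨M 0, ?_⟩; rintro y ⟨t, rfl⟩; exact hbdd t 0
  set Mstar : ℝ := ⨅ t, M t with hMstardef
  set mstar : ℝ := ⨆ t, m t with hmstardef
  have hMtend : Filter.Tendsto M Filter.atTop (nhds Mstar) := tendsto_atTop_ciInf hManti hbb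
  have hmtend : Filter.Tendsto m Filter.atTop (nhds mstar) := tendsto_atTop_ciSup hmmono hba
  have hMstar_le : ∀ t : ℕ, Mstar ≤ M t := fun t => ciInf_le hbb t
  have hmstar_ge : ∀ t : ℕ, m t ≤ mstar := fun t => le_ciSup hba t
  have h_m_le_M : mstar ≤ Mstar := ciSup_le fun s => le_ciInf fun t => hbdd s t
  clear_value Mstar mstar
  -- main claim : Mstar ≤ mstar
  have hMm : Mstar ≤ mstar := by
    by_contra hlt
    push_neg at hlt
    set n : ℕ := N.card with hndef
    have hn1 : 1 ≤ n := Finset.card_pos.mpr hN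
    set ε0 : ℝ := (Mstar - mstar) / 3 with hε0def
    have hε0 : 0 < ε0 := by rw [hε0def]; linarith
    set ε : ℝ := α ^ n * ε0 / 2 with hεdef
    have hεpos : 0 < ε := by positivity
    set εj : ℕ → ℝ := fun j => α ^ j * ε0 - (1 - α ^ j) * ε with hεjdef
    have hpow_le1 : ∀ j : ℕ, α ^ j ≤ 1 := fun j => pow_le_one₀ hα0' hα1.le
    have hpow_pos : ∀ j : ℕ, 0 < α ^ j := fun j => pow_pos hα0 j
    have hαn_le : ∀ j ≤ n, α ^ n ≤ α ^ j := fun j hj => pow_le_pow_of_le_one hα0' hα1.le hj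
    have hεjpos : ∀ j ≤ n, 0 < εj j := by
      intro j hj
      have h1 := mul_le_mul_of_nonneg_right (hαn_le j hj) hε0.le
      have h2 : (1 - α ^ j) * ε ≤ ε := by nlinarith [hpow_pos j, hpow_le1 j]
      simp only [hεjdef]
      linarith [h1, h2, hεpos, hεdef]
    have hεj_le : ∀ j : ℕ, εj j ≤ ε0 := by
      intro j
      have h1 := mul_le_mul_of_nonneg_right (hpow_le1 j) hε0.le
      have h2 : 0 ≤ (1 - α ^ j) * ε := mul_nonneg (by nlinarith [hpow_le1 j]) hεpos.le
      simp only [hεjdef]; nlinarith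
    have hεj_ge : ∀ j : ℕ, -ε ≤ εj j := by
      intro j
      have h1 : 0 ≤ α ^ j * ε0 := mul_nonneg (hpow_pos j).le hε0.le
      have h2 : (1 - α ^ j) * ε ≤ ε := by nlinarith [hpow_pos j, hpow_le1 j]
      simp only [hεjdef]; nlinarith
    have hrec : ∀ j : ℕ, εj (j+1) = α * εj j - (1 - α) * ε := by
      intro j; simp only [hεjdef, pow_succ]; ring
    clear_value εj
    clear_value ε
    clear_value ε0
    -- pick the starting time T
    obtain ⟨T1, hT1⟩ := Filter.eventually_atTop.mp
      (hMtend (Iio_mem_nhds (show Mstar < Mstar + ε by linarith)))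
    obtain ⟨T2, hT2⟩ := Filter.eventually_atTop.mp
      (hmtend (Ioi_mem_nhds (show mstar - ε < mstar by linarith)))
    set T : ℕ := max t0 (max T1 T2) with hTdef
    have hMT : ∀ t ≥ T, M t < Mstar + ε := by
      intro t ht
      exact hT1 t (le_trans (le_trans (le_max_left T1 T2) (le_max_right t0 _)) ht)
    have hmT : ∀ t ≥ T, mstar - ε < m t := by
      intro t ht
      exact hT2 t (le_trans (le_trans (le_max_right T1 T2) (le_max_right t0 _)) ht)
    have hTrob : ∀ j : ℕ, RSRobust (E (T + j)) (F + 1) (F + 1) :=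
      fun j => hrob (T + j) (le_trans (le_max_left t0 _) (Nat.le_add_right T j))
    set S1 : ℕ → Finset V := fun j =>
      Finset.univ.filter (fun i => Mstar - εj j < x (T + j) i) with hS1def
    set S2 : ℕ → Finset V := fun j =>
      Finset.univ.filter (fun i => x (T + j) i < mstar + εj j) with hS2def
    -- the contraction step
    have hcontract_le : ∀ j : ℕ, ∀ i ∉ A,
        (∃ j0 ∈ (insert i (inNbrs (E (T + j)) i)) \ R (T + j) i,
            x (T + j) j0 ≤ Mstar - εj j) →
        x (T + (j+1)) i ≤ Mstar - εj (j+1) := by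
      intro j i hi ⟨j0, hj0, hj0le⟩
      obtain ⟨hval, hw, hsum, hxeq⟩ := hupd (T + j) i hi
      have hkept : ∀ k ∈ (insert i (inNbrs (E (T + j)) i)) \ R (T + j) i,
          x (T + j) k ≤ Mstar + ε := by
        intro k hk
        have h1 := keep_le hA hi hval (hxleM (T + j)) k hk
        have h2 := hMT (T + j) (Nat.le_add_right T j)
        linarith
      have h3 := avg_contract hα0' hw hsum hj0 hj0le
        (by have := hεj_ge j; linarith) hkept
      have h4 : x (T + (j+1)) i = x ((T + j) + 1) i := by ring_nf
      rw [h4, hxeq]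
      calc _ ≤ α * (Mstar - εj j) + (1 - α) * (Mstar + ε) := h3
        _ = Mstar - εj (j+1) := by rw [hrec j]; ring
    have hcontract_ge : ∀ j : ℕ, ∀ i ∉ A,
        (∃ j0 ∈ (insert i (inNbrs (E (T + j)) i)) \ R (T + j) i,
            mstar + εj j ≤ x (T + j) j0) →
        mstar + εj (j+1) ≤ x (T + (j+1)) i := by
      intro j i hi ⟨j0, hj0, hj0le⟩
      obtain ⟨hval, hw, hsum, hxeq⟩ := hupd (T + j) i hi
      have hkept : ∀ k ∈ (insert i (inNbrs (E (T + j)) i)) \ R (T + j) i,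
          mstar - ε ≤ x (T + j) k := by
        intro k hk
        have h1 := keep_ge hA hi hval (fun k hk => le_of_lt (lt_of_lt_of_le
          (hmT (T + j) (Nat.le_add_right T j)) (hmlex (T + j) k hk))) k hk
        linarith
      have h3 := avg_contract_ge hα0' hw hsum hj0 hj0le
        (by have := hεj_ge j; linarith) hkept
      have h4 : x (T + (j+1)) i = x ((T + j) + 1) i := by ring_nf
      rw [h4, hxeq]
      calc mstar + εj (j+1) = α * (mstar + εj j) + (1 - α) * (mstar - ε) := by
            rw [hrec j]; ring
        _ ≤ _ := h3
    -- staying out of S1 / S2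
    have hout1 : ∀ j : ℕ, ∀ i ∉ A, x (T + j) i ≤ Mstar - εj j → i ∉ S1 (j+1) := by
      intro j i hi hx hmem
      have h1 := hcontract_le j i hi ⟨i, hkeep (T + j) i hi, hx⟩
      rw [hS1def] at hmem
      have h2 : Mstar - εj (j+1) < x (T + (j+1)) i := (Finset.mem_filter.mp hmem).2
      linarith
    have hout2 : ∀ j : ℕ, ∀ i ∉ A, mstar + εj j ≤ x (T + j) i → i ∉ S2 (j+1) := by
      intro j i hi hx hmem
      have h1 := hcontract_ge j i hi ⟨i, hkeep (T + j) i hi, hx⟩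
      rw [hS2def] at hmem
      have h2 : x (T + (j+1)) i < mstar + εj (j+1) := (Finset.mem_filter.mp hmem).2
      linarith
    -- monotone inclusion off the sets
    have hS1mono : ∀ j : ℕ, S1 (j+1) ∩ N ⊆ S1 j ∩ N := by
      intro j i hi
      rw [Finset.mem_inter] at hi ⊢
      refine ⟨?_, hi.2⟩
      by_contra hc
      have hx : x (T + j) i ≤ Mstar - εj j := by
        rw [hS1def] at hc
        by_contra hc2
        push_neg at hc2
        exact hc (Finset.mem_filter.mpr ⟨Finset.mem_univ _, hc2⟩)
      exact hout1 j i ((hNmem i).mp hi.2) hx hi.1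
    have hS2mono : ∀ j : ℕ, S2 (j+1) ∩ N ⊆ S2 j ∩ N := by
      intro j i hi
      rw [Finset.mem_inter] at hi ⊢
      refine ⟨?_, hi.2⟩
      by_contra hc
      have hx : mstar + εj j ≤ x (T + j) i := by
        rw [hS2def] at hc
        by_contra hc2
        push_neg at hc2
        exact hc (Finset.mem_filter.mpr ⟨Finset.mem_univ _, hc2⟩)
      exact hout2 j i ((hNmem i).mp hi.2) hx hi.1
    -- nonemptiness and disjointness
    have hS1ne : ∀ j ≤ n, (S1 j ∩ N).Nonempty := by
      intro j hj
      obtain ⟨i, hiN, hie⟩ := Finset.exists_mem_eq_sup' hN (x (T + j))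
      refine ⟨i, Finset.mem_inter.mpr ⟨Finset.mem_filter.mpr ⟨Finset.mem_univ _, ?_⟩, hiN⟩⟩
      have h1 : Mstar ≤ M (T + j) := hMstar_le _
      have h2 := hεjpos j hj
      have h3 : M (T + j) = x (T + j) i := hie
      linarith
    have hS2ne : ∀ j ≤ n, (S2 j ∩ N).Nonempty := by
      intro j hj
      obtain ⟨i, hiN, hie⟩ := Finset.exists_mem_eq_inf' hN (x (T + j))
      refine ⟨i, Finset.mem_inter.mpr ⟨Finset.mem_filter.mpr ⟨Finset.mem_univ _, ?_⟩, hiN⟩⟩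
      have h1 : m (T + j) ≤ mstar := hmstar_ge _
      have h2 := hεjpos j hj
      have h3 : m (T + j) = x (T + j) i := hie
      linarith
    have hdisj : ∀ j ≤ n, Disjoint (S1 j) (S2 j) := by
      intro j hj
      rw [Finset.disjoint_left]
      intro a h1 h2
      rw [hS1def] at h1; rw [hS2def] at h2
      have h1' : Mstar - εj j < x (T + j) a := (Finset.mem_filter.mp h1).2
      have h2' : x (T + j) a < mstar + εj j := (Finset.mem_filter.mp h2).2
      have h3 := hεj_le j
      rw [hε0def] at h3
      linarith
    -- knocking a node out using robustness
    have hknock1 : ∀ j : ℕ, ∀ i ∉ A, i ∈ reachSet (E (T + j)) (F + 1) (S1 j) →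
        i ∉ S1 (j+1) := by
      intro j i hi hre hmem
      obtain ⟨hiS1, hcard⟩ := Finset.mem_filter.mp hre
      obtain ⟨hval, hw, hsum, hxeq⟩ := hupd (T + j) i hi
      have hTC : ∀ k ∈ inNbrs (E (T + j)) i \ S1 j, x (T + j) k ≤ Mstar - εj j := by
        intro k hk
        have h2 := (Finset.mem_sdiff.mp hk).2
        by_contra hc
        push_neg at hc
        exact h2 (by rw [hS1def]; exact Finset.mem_filter.mpr ⟨Finset.mem_univ _, hc⟩)
      have hiC : Mstar - εj j < x (T + j) i := by
        rw [hS1def] at hiS1; exact_mod_cast (Finset.mem_filter.mp hiS1).2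
      obtain ⟨j0, hj0, hj0le⟩ := exists_kept_le hval hcard Finset.sdiff_subset hTC hiC
      have h1 := hcontract_le j i hi ⟨j0, hj0, hj0le⟩
      rw [hS1def] at hmem
      have h2 : Mstar - εj (j+1) < x (T + (j+1)) i := (Finset.mem_filter.mp hmem).2
      linarith
    have hknock2 : ∀ j : ℕ, ∀ i ∉ A, i ∈ reachSet (E (T + j)) (F + 1) (S2 j) →
        i ∉ S2 (j+1) := by
      intro j i hi hre hmem
      obtain ⟨hiS2, hcard⟩ := Finset.mem_filter.mp hre
      obtain ⟨hval, hw, hsum, hxeq⟩ := hupd (T + j) i hi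
      have hTC : ∀ k ∈ inNbrs (E (T + j)) i \ S2 j, mstar + εj j ≤ x (T + j) k := by
        intro k hk
        have h2 := (Finset.mem_sdiff.mp hk).2
        by_contra hc
        push_neg at hc
        exact h2 (by rw [hS2def]; exact Finset.mem_filter.mpr ⟨Finset.mem_univ _, hc⟩)
      have hiC : x (T + j) i < mstar + εj j := by
        rw [hS2def] at hiS2; exact_mod_cast (Finset.mem_filter.mp hiS2).2
      obtain ⟨j0, hj0, hj0le⟩ := exists_kept_ge hval hcard Finset.sdiff_subset hTC hiC
      have h1 := hcontract_ge j i hi ⟨j0, hj0, hj0le⟩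
      rw [hS2def] at hmem
      have h2 : x (T + (j+1)) i < mstar + εj (j+1) := (Finset.mem_filter.mp hmem).2
      linarith
    -- at each step before n, some normal node is knocked out of S1 or S2
    have hdrop : ∀ j < n, (∃ i, i ∈ S1 j ∩ N ∧ i ∉ S1 (j+1)) ∨
        (∃ i, i ∈ S2 j ∩ N ∧ i ∉ S2 (j+1)) := by
      intro j hj
      have hj' : j ≤ n := hj.le
      have hS1ne' : (S1 j).Nonempty := by
        obtain ⟨i, hi⟩ := hS1ne j hj'
        exact ⟨i, (Finset.mem_inter.mp hi).1⟩
      have hS2ne' : (S2 j).Nonempty := by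
        obtain ⟨i, hi⟩ := hS2ne j hj'
        exact ⟨i, (Finset.mem_inter.mp hi).1⟩
      rcases hTrob j (S1 j) (S2 j) hS1ne' hS2ne' (hdisj j hj') with h1 | h2 | h3
      · left
        obtain ⟨i, hi⟩ := hS1ne j hj'
        have hreq : reachSet (E (T + j)) (F + 1) (S1 j) = S1 j :=
          Finset.eq_of_subset_of_card_le (Finset.filter_subset _ _) (le_of_eq h1.symm)
        have hiN : i ∈ N := (Finset.mem_inter.mp hi).2
        refine ⟨i, hi, hknock1 j i ((hNmem i).mp hiN) ?_⟩
        rw [hreq]; exact (Finset.mem_inter.mp hi).1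
      · right
        obtain ⟨i, hi⟩ := hS2ne j hj'
        have hreq : reachSet (E (T + j)) (F + 1) (S2 j) = S2 j :=
          Finset.eq_of_subset_of_card_le (Finset.filter_subset _ _) (le_of_eq h2.symm)
        have hiN : i ∈ N := (Finset.mem_inter.mp hi).2
        refine ⟨i, hi, hknock2 j i ((hNmem i).mp hiN) ?_⟩
        rw [hreq]; exact (Finset.mem_inter.mp hi).1
      · have hXdis : Disjoint (reachSet (E (T + j)) (F + 1) (S1 j))
            (reachSet (E (T + j)) (F + 1) (S2 j)) :=
          (hdisj j hj').mono (Finset.filter_subset _ _) (Finset.filter_subset _ _)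
        have hcard : F + 1 ≤ ((reachSet (E (T + j)) (F + 1) (S1 j)) ∪
            (reachSet (E (T + j)) (F + 1) (S2 j))).card := by
          rw [Finset.card_union_of_disjoint hXdis]; exact h3
        have hnsub : ¬ ((reachSet (E (T + j)) (F + 1) (S1 j)) ∪
            (reachSet (E (T + j)) (F + 1) (S2 j)) ⊆ A) := by
          intro h
          have := Finset.card_le_card h
          omega
        obtain ⟨i, hiX, hiA⟩ := Finset.not_subset.mp hnsub
        rcases Finset.mem_union.mp hiX with h | h
        · left
          refine ⟨i, Finset.mem_inter.mpr ⟨Finset.mem_of_mem_filter i h, (hNmem i).mpr hiA⟩,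
            hknock1 j i hiA h⟩
        · right
          refine ⟨i, Finset.mem_inter.mpr ⟨Finset.mem_of_mem_filter i h, (hNmem i).mpr hiA⟩,
            hknock2 j i hiA h⟩
    -- the decreasing potential
    have hPdec : ∀ j < n, (S1 (j+1) ∩ N).card + (S2 (j+1) ∩ N).card + 1 ≤
        (S1 j ∩ N).card + (S2 j ∩ N).card := by
      intro j hj
      have hc1 := Finset.card_le_card (hS1mono j)
      have hc2 := Finset.card_le_card (hS2mono j)
      rcases hdrop j hj with ⟨i, hiin, hiout⟩ | ⟨i, hiin, hiout⟩
      · have hss : S1 (j+1) ∩ N ⊂ S1 j ∩ N :=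
          ⟨hS1mono j, fun h => hiout ((Finset.mem_inter.mp (h hiin)).1)⟩
        have := Finset.card_lt_card hss
        omega
      · have hss : S2 (j+1) ∩ N ⊂ S2 j ∩ N :=
          ⟨hS2mono j, fun h => hiout ((Finset.mem_inter.mp (h hiin)).1)⟩
        have := Finset.card_lt_card hss
        omega
    have hfinal : ∀ j ≤ n, (S1 j ∩ N).card + (S2 j ∩ N).card + j ≤
        (S1 0 ∩ N).card + (S2 0 ∩ N).card := by
      intro j
      induction j with
      | zero => intro _; omega
      | succ k ih =>
        intro hk
        have hk' : k < n := hk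
        have h1 := hPdec k hk'
        have h2 := ih hk'.le
        omega
    have hP0 : (S1 0 ∩ N).card + (S2 0 ∩ N).card ≤ n := by
      have hd : Disjoint (S1 0 ∩ N) (S2 0 ∩ N) :=
        (hdisj 0 (Nat.zero_le n)).mono Finset.inter_subset_left Finset.inter_subset_left
      rw [← Finset.card_union_of_disjoint hd]
      exact Finset.card_le_card
        (Finset.union_subset Finset.inter_subset_right Finset.inter_subset_right)
    have h1 := (hS1ne n le_rfl).card_pos
    have h2 := (hS2ne n le_rfl).card_pos
    have h3 := hfinal n le_rfl
    omega
  have heq : mstar = Mstar := le_antisymm h_m_le_M hMm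
  refine ⟨Mstar, ?_, ?_⟩
  · intro i hi
    have hml : Filter.Tendsto m Filter.atTop (nhds Mstar) := heq ▸ hmtend
    exact tendsto_of_tendsto_of_tendsto_of_le_of_le hml hMtend
      (fun t => hmlex t i hi) (fun t => hxleM t i hi)
  · intro t i hi
    constructor
    · exact le_trans (hmmono (Nat.zero_le t)) (hmlex t i hi)
    · exact le_trans (hxleM t i hi) (hManti (Nat.zero_le t))
end

section
/- Consider a time-invariant digraph D = (V, E) in which each normal node updates its value according to discrete-time ARC-P with parameter F, and suppose the set of malicious adversary nodes is F-locally bounded (every normal node has at most F adversary in-neighbors). If D is (2F+1)-robust, then the normal nodes achieve resilient asymptotic consensus: there exists L ∈ ℝ such that lim_{t→∞} x_i[t] = L for every normal node i, and x_i[t] ∈ [m[0], M[0]] for all t and all normal i, for any choice of initial values, any valid weight sequences, and any adversary value trajectories. -/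
/-- A nonempty set `S` is `r`-reachable if some node of `S` has at least `r`
in-neighbors outside of `S`. -/
def rReachable {V : Type*} [Fintype V] [DecidableEq V] (E : Finset (V × V)) (r : ℕ)
    (S : Finset V) : Prop :=
  ∃ i ∈ S, r ≤ ((inNbrs E i) \ S).card

/-- A digraph is `r`-robust if for every pair of nonempty, disjoint subsets of nodes,
at least one of the two subsets is `r`-reachable. -/
def rRobust {V : Type*} [Fintype V] [DecidableEq V] (E : Finset (V × V)) (r : ℕ) : Prop :=
  ∀ S1 S2 : Finset V, S1.Nonempty → S2.Nonempty → Disjoint S1 S2 →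
    rReachable E r S1 ∨ rReachable E r S2

private lemma keptLe {V : Type*} [DecidableEq V]
    (Vi : Finset V) (A : Finset V) (F : ℕ) (xt : V → ℝ) (Rem : Finset V) (i : V) (B : ℝ)
    (hiA : i ∉ A) (hloc : (Vi ∩ A).card ≤ F)
    (hval : ValidRemoved Vi xt i F Rem)
    (hB : ∀ k ∉ A, xt k ≤ B) :
    ∀ j ∈ (insert i Vi) \ Rem, xt j ≤ B := by
  intro j hj
  rw [Finset.mem_sdiff] at hj
  obtain ⟨hj1, hj2⟩ := hj
  by_cases hjA : j ∈ A
  · have hji : j ≠ i := fun h => hiA (h ▸ hjA)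
    have hjV : j ∈ Vi := by
      rcases Finset.mem_insert.mp hj1 with h | h
      · exact absurd h hji
      · exact h
    by_contra hlt
    push_neg at hlt
    have hxi : xt i ≤ B := hB i hiA
    have hij : xt i < xt j := lt_of_le_of_lt hxi hlt
    have hjf : j ∈ Vi.filter (fun k => xt i < xt k) := Finset.mem_filter.mpr ⟨hjV, hij⟩
    obtain ⟨Ra, Rb, hR, hRa, hRcase, hRb, hRbcase⟩ := hval
    have hjRa : j ∉ Ra := fun h => hj2 (hR ▸ Finset.mem_union_left _ h)
    rcases hRcase with ⟨heq, _⟩ | ⟨hcard, hdom⟩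
    · exact hjRa (heq ▸ hjf)
    · have hsub : insert j Ra ⊆ Vi ∩ A := by
        intro k hk
        rcases Finset.mem_insert.mp hk with rfl | hk
        · exact Finset.mem_inter.mpr ⟨hjV, hjA⟩
        · have hkf := hRa hk
          have hkV := (Finset.mem_filter.mp hkf).1
          refine Finset.mem_inter.mpr ⟨hkV, ?_⟩
          by_contra hkA
          have h1 := hB k hkA
          have h2 := hdom k hk j (Finset.mem_sdiff.mpr ⟨hjf, hjRa⟩)
          linarith
      have hle := Finset.card_le_card hsub
      rw [Finset.card_insert_of_notMem hjRa, hcard] at hle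
      omega
  · exact hB j hjA

private lemma keptGe {V : Type*} [DecidableEq V]
    (Vi : Finset V) (A : Finset V) (F : ℕ) (xt : V → ℝ) (Rem : Finset V) (i : V) (b : ℝ)
    (hiA : i ∉ A) (hloc : (Vi ∩ A).card ≤ F)
    (hval : ValidRemoved Vi xt i F Rem)
    (hb : ∀ k ∉ A, b ≤ xt k) :
    ∀ j ∈ (insert i Vi) \ Rem, b ≤ xt j := by
  intro j hj
  rw [Finset.mem_sdiff] at hj
  obtain ⟨hj1, hj2⟩ := hj
  by_cases hjA : j ∈ A
  · have hji : j ≠ i := fun h => hiA (h ▸ hjA)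
    have hjV : j ∈ Vi := by
      rcases Finset.mem_insert.mp hj1 with h | h
      · exact absurd h hji
      · exact h
    by_contra hlt
    push_neg at hlt
    have hxi : b ≤ xt i := hb i hiA
    have hij : xt j < xt i := lt_of_lt_of_le hlt hxi
    have hjf : j ∈ Vi.filter (fun k => xt k < xt i) := Finset.mem_filter.mpr ⟨hjV, hij⟩
    obtain ⟨Ra, Rb, hR, hRa, hRcase, hRb, hRbcase⟩ := hval
    have hjRb : j ∉ Rb := fun h => hj2 (hR ▸ Finset.mem_union_right _ h)
    rcases hRbcase with ⟨heq, _⟩ | ⟨hcard, hdom⟩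
    · exact hjRb (heq ▸ hjf)
    · have hsub : insert j Rb ⊆ Vi ∩ A := by
        intro k hk
        rcases Finset.mem_insert.mp hk with rfl | hk
        · exact Finset.mem_inter.mpr ⟨hjV, hjA⟩
        · have hkf := hRb hk
          have hkV := (Finset.mem_filter.mp hkf).1
          refine Finset.mem_inter.mpr ⟨hkV, ?_⟩
          by_contra hkA
          have h1 := hb k hkA
          have h2 := hdom k hk j (Finset.mem_sdiff.mpr ⟨hjf, hjRb⟩)
          linarith
      have hle := Finset.card_le_card hsub
      rw [Finset.card_insert_of_notMem hjRb, hcard] at hle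
      omega
  · exact hb j hjA

private lemma avgLe {V : Type*} [DecidableEq V] (S : Finset V) (wf xt : V → ℝ)
    (α B y : ℝ) (hα0 : 0 < α)
    (hw : ∀ j ∈ S, α ≤ wf j) (hsum : ∑ j ∈ S, wf j = 1)
    (hB : ∀ j ∈ S, xt j ≤ B) (j0 : V) (hj0 : j0 ∈ S) (hy : xt j0 ≤ y) (hyB : y ≤ B) :
    ∑ j ∈ S, wf j * xt j ≤ α * y + (1 - α) * B := by
  have hw0 : ∀ j ∈ S, (0:ℝ) ≤ wf j := fun j hj => le_of_lt (lt_of_lt_of_le hα0 (hw j hj))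
  have h1 : ∑ j ∈ S, wf j * xt j = wf j0 * xt j0 + ∑ j ∈ S.erase j0, wf j * xt j :=
    (Finset.add_sum_erase S _ hj0).symm
  have h1' : wf j0 + ∑ j ∈ S.erase j0, wf j = 1 := by
    rw [Finset.add_sum_erase S _ hj0]; exact hsum
  have h2 : ∑ j ∈ S.erase j0, wf j * xt j ≤ ∑ j ∈ S.erase j0, wf j * B :=
    Finset.sum_le_sum (fun j hj => mul_le_mul_of_nonneg_left
      (hB j (Finset.mem_of_mem_erase hj)) (hw0 j (Finset.mem_of_mem_erase hj)))
  have h3 : ∑ j ∈ S.erase j0, wf j * B = (1 - wf j0) * B := by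
    rw [← Finset.sum_mul]; congr 1; linarith
  have h4 : wf j0 * xt j0 ≤ wf j0 * y :=
    mul_le_mul_of_nonneg_left hy (hw0 j0 hj0)
  have h5 : wf j0 * y + (1 - wf j0) * B ≤ α * y + (1 - α) * B := by
    nlinarith [mul_nonneg (sub_nonneg.mpr (hw j0 hj0)) (sub_nonneg.mpr hyB)]
  rw [h1]
  calc wf j0 * xt j0 + ∑ j ∈ S.erase j0, wf j * xt j
      ≤ wf j0 * y + (1 - wf j0) * B := by rw [← h3]; exact add_le_add h4 h2
    _ ≤ α * y + (1 - α) * B := h5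

private lemma avgGe {V : Type*} [DecidableEq V] (S : Finset V) (wf xt : V → ℝ)
    (α b y : ℝ) (hα0 : 0 < α)
    (hw : ∀ j ∈ S, α ≤ wf j) (hsum : ∑ j ∈ S, wf j = 1)
    (hb : ∀ j ∈ S, b ≤ xt j) (j0 : V) (hj0 : j0 ∈ S) (hy : y ≤ xt j0) (hyb : b ≤ y) :
    α * y + (1 - α) * b ≤ ∑ j ∈ S, wf j * xt j := by
  have hw0 : ∀ j ∈ S, (0:ℝ) ≤ wf j := fun j hj => le_of_lt (lt_of_lt_of_le hα0 (hw j hj))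
  have h1 : ∑ j ∈ S, wf j * xt j = wf j0 * xt j0 + ∑ j ∈ S.erase j0, wf j * xt j :=
    (Finset.add_sum_erase S _ hj0).symm
  have h1' : wf j0 + ∑ j ∈ S.erase j0, wf j = 1 := by
    rw [Finset.add_sum_erase S _ hj0]; exact hsum
  have h2 : ∑ j ∈ S.erase j0, wf j * b ≤ ∑ j ∈ S.erase j0, wf j * xt j :=
    Finset.sum_le_sum (fun j hj => mul_le_mul_of_nonneg_left
      (hb j (Finset.mem_of_mem_erase hj)) (hw0 j (Finset.mem_of_mem_erase hj)))
  have h3 : ∑ j ∈ S.erase j0, wf j * b = (1 - wf j0) * b := by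
    rw [← Finset.sum_mul]; congr 1; linarith
  have h4 : wf j0 * y ≤ wf j0 * xt j0 :=
    mul_le_mul_of_nonneg_left hy (hw0 j0 hj0)
  have h5 : α * y + (1 - α) * b ≤ wf j0 * y + (1 - wf j0) * b := by
    nlinarith [mul_nonneg (sub_nonneg.mpr (hw j0 hj0)) (sub_nonneg.mpr hyb)]
  rw [h1]
  calc α * y + (1 - α) * b ≤ wf j0 * y + (1 - wf j0) * b := h5
    _ ≤ wf j0 * xt j0 + ∑ j ∈ S.erase j0, wf j * xt j := by
        rw [← h3]; exact add_le_add h4 h2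

/-- Sufficiency for the `F`-local malicious model: on a time-invariant `(2F+1)`-robust
digraph, if each normal node runs discrete-time ARC-P with parameter `F` and every
normal node has at most `F` adversary in-neighbors, then the normal nodes achieve
resilient asymptotic consensus: they all converge to a common limit `L`, and every
normal value stays in `[m[0], M[0]]` for all time, for any initial values, any valid
weights and removed sets, and any adversary value trajectories. -/
theorem stmt13 {V : Type*} [Fintype V] [DecidableEq V]
    (hn : 2 ≤ Fintype.card V)
    (E : Finset (V × V)) (hsimple : ∀ i : V, (i, i) ∉ E)
    (A : Finset V) (hN : (Finset.univ \ A).Nonempty)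
    (F : ℕ) (α : ℝ) (hα0 : 0 < α) (hα1 : α < 1)
    (hA : ∀ i ∉ A, (inNbrs E i ∩ A).card ≤ F)
    (hrob : rRobust E (2 * F + 1))
    (x : ℕ → V → ℝ) (R : ℕ → V → Finset V) (w : ℕ → V → V → ℝ)
    (hupd : ∀ t : ℕ, ∀ i ∉ A, ArcpUpdate E F α x R w i t) :
    ∃ L : ℝ,
      (∀ i ∉ A, Filter.Tendsto (fun t => x t i) Filter.atTop (nhds L)) ∧
      ∀ t : ℕ, ∀ i ∉ A,
        x t i ∈ Set.Icc ((Finset.univ \ A).inf' hN (x 0))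
          ((Finset.univ \ A).sup' hN (x 0)) := by
  classical
  have hNiff : ∀ i : V, i ∈ Finset.univ \ A ↔ i ∉ A := by
    intro i; simp [Finset.mem_sdiff]
  set N : Finset V := Finset.univ \ A with hNdef
  set M : ℕ → ℝ := fun t => N.sup' hN (x t) with hMdef
  set m : ℕ → ℝ := fun t => N.inf' hN (x t) with hmdef
  have hxM : ∀ t : ℕ, ∀ i ∉ A, x t i ≤ M t := fun t i hi =>
    Finset.le_sup' (x t) ((hNiff i).mpr hi)
  have hxm : ∀ t : ℕ, ∀ i ∉ A, m t ≤ x t i := fun t i hi =>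
    Finset.inf'_le (x t) ((hNiff i).mpr hi)
  have hiS : ∀ t : ℕ, ∀ i ∉ A, i ∈ (insert i (inNbrs E i)) \ R t i := by
    intro t i hi
    obtain ⟨Ra, Rb, hR, hRa, _, hRb, _⟩ := (hupd t i hi).1
    refine Finset.mem_sdiff.mpr ⟨Finset.mem_insert_self _ _, ?_⟩
    rw [hR]
    intro hmem
    rcases Finset.mem_union.mp hmem with h | h
    · exact absurd (Finset.mem_filter.mp (hRa h)).2 (lt_irrefl _)
    · exact absurd (Finset.mem_filter.mp (hRb h)).2 (lt_irrefl _)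
  have hstepLe : ∀ t : ℕ, ∀ i ∉ A, ∀ B y : ℝ, (∀ k ∉ A, x t k ≤ B) →
      ∀ j0 ∈ (insert i (inNbrs E i)) \ R t i, x t j0 ≤ y → y ≤ B →
      x (t+1) i ≤ α * y + (1 - α) * B := by
    intro t i hi B y hB j0 hj0 hy hyB
    obtain ⟨hval, hw, hsum, hx⟩ := hupd t i hi
    rw [hx]
    exact avgLe _ _ _ α B y hα0 hw hsum
      (keptLe (inNbrs E i) A F (x t) (R t i) i B hi (hA i hi) hval hB) j0 hj0 hy hyB
  have hstepGe : ∀ t : ℕ, ∀ i ∉ A, ∀ b y : ℝ, (∀ k ∉ A, b ≤ x t k) →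
      ∀ j0 ∈ (insert i (inNbrs E i)) \ R t i, y ≤ x t j0 → b ≤ y →
      α * y + (1 - α) * b ≤ x (t+1) i := by
    intro t i hi b y hb j0 hj0 hy hyb
    obtain ⟨hval, hw, hsum, hx⟩ := hupd t i hi
    rw [hx]
    exact avgGe _ _ _ α b y hα0 hw hsum
      (keptGe (inNbrs E i) A F (x t) (R t i) i b hi (hA i hi) hval hb) j0 hj0 hy hyb
  have hMstep : ∀ t : ℕ, M (t+1) ≤ M t := by
    intro t
    apply Finset.sup'_le
    intro i hiN
    have hi := (hNiff i).mp hiN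
    have h := hstepLe t i hi (M t) (M t) (hxM t) i (hiS t i hi) (hxM t i hi) le_rfl
    have he : α * M t + (1 - α) * M t = M t := by ring
    linarith
  have hmstep : ∀ t : ℕ, m t ≤ m (t+1) := by
    intro t
    apply Finset.le_inf'
    intro i hiN
    have hi := (hNiff i).mp hiN
    have h := hstepGe t i hi (m t) (m t) (hxm t) i (hiS t i hi) (hxm t i hi) le_rfl
    have he : α * m t + (1 - α) * m t = m t := by ring
    linarith
  have hManti : Antitone M := antitone_nat_of_succ_le hMstep
  have hmmono : Monotone m := monotone_nat_of_le_succ hmstep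
  have hmM : ∀ t : ℕ, m t ≤ M t := by
    intro t
    obtain ⟨i, hi⟩ := hN
    exact le_trans (Finset.inf'_le _ hi) (Finset.le_sup' _ hi)
  have hbddM : BddBelow (Set.range M) := by
    refine ⟨m 0, ?_⟩
    rintro _ ⟨t, rfl⟩
    exact le_trans (hmmono (Nat.zero_le t)) (hmM t)
  have hbddm : BddAbove (Set.range m) := by
    refine ⟨M 0, ?_⟩
    rintro _ ⟨t, rfl⟩
    exact le_trans (hmM t) (hManti (Nat.zero_le t))
  set AM : ℝ := ⨅ t, M t with hAMdef
  set Am : ℝ := ⨆ t, m t with hAmdef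
  have hMtend : Filter.Tendsto M Filter.atTop (nhds AM) := tendsto_atTop_ciInf hManti hbddM
  have hmtend : Filter.Tendsto m Filter.atTop (nhds Am) := tendsto_atTop_ciSup hmmono hbddm
  have hAMle : ∀ t : ℕ, AM ≤ M t := fun t => ciInf_le hbddM t
  have hAmge : ∀ t : ℕ, m t ≤ Am := fun t => le_ciSup hbddm t
  have hAmAM : Am ≤ AM := by
    apply ciSup_le
    intro t
    apply le_ciInf
    intro s
    rcases le_total t s with h | h
    · exact le_trans (hmmono h) (hmM s)
    · exact le_trans (hmM t) (hManti h)
  have hEq : Am = AM := by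
    by_contra hne
    have hlt : Am < AM := lt_of_le_of_ne hAmAM hne
    set ε0 : ℝ := (AM - Am) / 2 with hε0def
    have hε0 : 0 < ε0 := by rw [hε0def]; linarith
    set n : ℕ := Fintype.card V with hndef
    have hαn : 0 < α ^ n := pow_pos hα0 n
    set ε : ℝ := α ^ n * ε0 / 2 with hεdef
    have hε : 0 < ε := by rw [hεdef]; positivity
    have h2e : 2 * ε = α ^ n * ε0 := by rw [hεdef]; ring
    set εs : ℕ → ℝ := fun j => α ^ j * ε0 - (1 - α ^ j) * ε with hεsdef
    have hεrec : ∀ j : ℕ, εs (j+1) = α * εs j - (1 - α) * ε := by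
      intro j
      simp only [hεsdef]
      rw [pow_succ]
      ring
    have hεge : ∀ j : ℕ, j ≤ n → ε ≤ εs j := by
      intro j hj
      have h1 : α ^ n ≤ α ^ j := pow_le_pow_of_le_one (le_of_lt hα0) (le_of_lt hα1) hj
      have h1' : α ^ n * ε0 ≤ α ^ j * ε0 := mul_le_mul_of_nonneg_right h1 (le_of_lt hε0)
      have h2 : 0 ≤ α ^ j * ε := mul_nonneg (pow_nonneg (le_of_lt hα0) j) (le_of_lt hε)
      simp only [hεsdef]
      nlinarith
    have hεle : ∀ j : ℕ, εs j ≤ ε0 := by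
      intro j
      have h2 : α ^ j ≤ 1 := pow_le_one₀ (le_of_lt hα0) (le_of_lt hα1)
      have h3 : (0:ℝ) ≤ α ^ j := pow_nonneg (le_of_lt hα0) j
      simp only [hεsdef]
      nlinarith
    have hT1 : ∃ T1 : ℕ, M T1 < AM + ε := by
      by_contra h
      push_neg at h
      have h2 : AM + ε ≤ AM := le_ciInf h
      linarith
    have hT2 : ∃ T2 : ℕ, Am - ε < m T2 := by
      by_contra h
      push_neg at h
      have h2 : Am ≤ Am - ε := ciSup_le h
      linarith
    obtain ⟨T1, hT1⟩ := hT1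
    obtain ⟨T2, hT2⟩ := hT2
    set T := max T1 T2 with hTdef
    have hMb : ∀ j : ℕ, ∀ k ∉ A, x (T + j) k ≤ AM + ε := by
      intro j k hk
      have h1 : M (T + j) ≤ M T1 := hManti (le_trans (le_max_left _ _) (Nat.le_add_right _ _))
      exact le_of_lt (lt_of_le_of_lt (le_trans (hxM _ k hk) h1) hT1)
    have hmb : ∀ j : ℕ, ∀ k ∉ A, Am - ε ≤ x (T + j) k := by
      intro j k hk
      have h1 : m T2 ≤ m (T + j) := hmmono (le_trans (le_max_right _ _) (Nat.le_add_right _ _))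
      exact le_of_lt (lt_of_lt_of_le hT2 (le_trans h1 (hxm _ k hk)))
    set XM : ℕ → Finset V := fun j => N.filter (fun i => AM - εs j < x (T + j) i) with hXMdef
    set Xm : ℕ → Finset V := fun j => N.filter (fun i => x (T + j) i < Am + εs j) with hXmdef
    have hXMmem : ∀ j : ℕ, ∀ i : V, i ∈ XM j ↔ (i ∈ N ∧ AM - εs j < x (T + j) i) := by
      intro j i; simp only [hXMdef, Finset.mem_filter]
    have hXmmem : ∀ j : ℕ, ∀ i : V, i ∈ Xm j ↔ (i ∈ N ∧ x (T + j) i < Am + εs j) := by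
      intro j i; simp only [hXmdef, Finset.mem_filter]
    have hdisj : ∀ j : ℕ, Disjoint (XM j) (Xm j) := by
      intro j
      rw [Finset.disjoint_left]
      intro a haM ham
      have h1 := ((hXMmem j a).mp haM).2
      have h2 := ((hXmmem j a).mp ham).2
      have h3 := hεle j
      have h4 : ε0 = (AM - Am) / 2 := hε0def
      linarith
    have hdropM : ∀ j : ℕ, j ≤ n → ∀ i, i ∉ A →
        (∃ k ∈ (insert i (inNbrs E i)) \ R (T + j) i, x (T + j) k ≤ AM - εs j) →
        i ∉ XM (j + 1) := by
      rintro j hj i hi ⟨k, hk, hxk⟩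
      have hyB : AM - εs j ≤ AM + ε := by linarith [hεge j hj, hε]
      have hstep := hstepLe (T + j) i hi (AM + ε) (AM - εs j) (hMb j) k hk hxk hyB
      intro hmem
      have h2 := ((hXMmem (j+1) i).mp hmem).2
      have h3 : T + (j + 1) = (T + j) + 1 := by omega
      rw [h3] at h2
      have h4 : α * (AM - εs j) + (1 - α) * (AM + ε) = AM - (α * εs j - (1 - α) * ε) := by ring
      have h5 := hεrec j
      linarith
    have hdropm : ∀ j : ℕ, j ≤ n → ∀ i, i ∉ A →
        (∃ k ∈ (insert i (inNbrs E i)) \ R (T + j) i, Am + εs j ≤ x (T + j) k) →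
        i ∉ Xm (j + 1) := by
      rintro j hj i hi ⟨k, hk, hxk⟩
      have hyb : Am - ε ≤ Am + εs j := by linarith [hεge j hj, hε]
      have hstep := hstepGe (T + j) i hi (Am - ε) (Am + εs j) (hmb j) k hk hxk hyb
      intro hmem
      have h2 := ((hXmmem (j+1) i).mp hmem).2
      have h3 : T + (j + 1) = (T + j) + 1 := by omega
      rw [h3] at h2
      have h4 : α * (Am + εs j) + (1 - α) * (Am - ε) = Am + (α * εs j - (1 - α) * ε) := by ring
      have h5 := hεrec j
      linarith
    have hsubM : ∀ j : ℕ, j ≤ n → XM (j+1) ⊆ XM j := by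
      intro j hj i hmem
      by_contra hni
      have hiN : i ∈ N := ((hXMmem (j+1) i).mp hmem).1
      have hi : i ∉ A := (hNiff i).mp hiN
      have hxi : x (T + j) i ≤ AM - εs j := by
        by_contra h
        push_neg at h
        exact hni ((hXMmem j i).mpr ⟨hiN, h⟩)
      exact (hdropM j hj i hi ⟨i, hiS _ i hi, hxi⟩) hmem
    have hsubm : ∀ j : ℕ, j ≤ n → Xm (j+1) ⊆ Xm j := by
      intro j hj i hmem
      by_contra hni
      have hiN : i ∈ N := ((hXmmem (j+1) i).mp hmem).1
      have hi : i ∉ A := (hNiff i).mp hiN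
      have hxi : Am + εs j ≤ x (T + j) i := by
        by_contra h
        push_neg at h
        exact hni ((hXmmem j i).mpr ⟨hiN, h⟩)
      exact (hdropm j hj i hi ⟨i, hiS _ i hi, hxi⟩) hmem
    have hstrict : ∀ j : ℕ, j ≤ n → (XM j).Nonempty → (Xm j).Nonempty →
        (XM (j+1)).card + (Xm (j+1)).card < (XM j).card + (Xm j).card := by
      intro j hj hne1 hne2
      have hcardM : (XM (j+1)).card ≤ (XM j).card := Finset.card_le_card (hsubM j hj)
      have hcardm : (Xm (j+1)).card ≤ (Xm j).card := Finset.card_le_card (hsubm j hj)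
      rcases hrob (XM j) (Xm j) hne1 hne2 (hdisj j) with hr | hr
      · obtain ⟨i, hiX, hcard⟩ := hr
        have hiN : i ∈ N := ((hXMmem j i).mp hiX).1
        have hi : i ∉ A := (hNiff i).mp hiN
        obtain ⟨Ra, Rb, hR, hRa, hRacase, hRb, hRbcase⟩ := (hupd (T + j) i hi).1
        have hRbcard : Rb.card ≤ F := by
          rcases hRbcase with ⟨_, h⟩ | ⟨h, _⟩
          · exact h
          · exact le_of_eq h
        have hKcard : F + 1 ≤ ((inNbrs E i \ XM j) \ A).card := by
          have e1 := Finset.card_sdiff_add_card_inter (inNbrs E i \ XM j) A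
          have e2 : ((inNbrs E i \ XM j) ∩ A).card ≤ (inNbrs E i ∩ A).card :=
            Finset.card_le_card (Finset.inter_subset_inter Finset.sdiff_subset Finset.Subset.rfl)
          have e3 := hA i hi
          omega
        have hKval : ∀ k ∈ (inNbrs E i \ XM j) \ A, x (T + j) k ≤ AM - εs j := by
          intro k hk
          rw [Finset.mem_sdiff, Finset.mem_sdiff] at hk
          obtain ⟨⟨hk1, hk2⟩, hk3⟩ := hk
          have hkN : k ∈ N := (hNiff k).mpr hk3
          by_contra h
          push_neg at h
          exact hk2 ((hXMmem j k).mpr ⟨hkN, h⟩)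
        have hKRa : ∀ k ∈ (inNbrs E i \ XM j) \ A, k ∉ Ra := by
          intro k hk hkRa
          have h1 := (Finset.mem_filter.mp (hRa hkRa)).2
          have h2 := hKval k hk
          have hxi : AM - εs j < x (T + j) i := ((hXMmem j i).mp hiX).2
          linarith
        have hKkept : ∃ k ∈ (inNbrs E i \ XM j) \ A, k ∉ R (T + j) i := by
          by_contra h
          push_neg at h
          have hsub : (inNbrs E i \ XM j) \ A ⊆ Rb := by
            intro k hk
            have hh := h k hk
            rw [hR] at hh
            rcases Finset.mem_union.mp hh with h1 | h1
            · exact absurd h1 (hKRa k hk)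
            · exact h1
          have := Finset.card_le_card hsub
          omega
        obtain ⟨k, hkK, hkR⟩ := hKkept
        have hkS : k ∈ (insert i (inNbrs E i)) \ R (T + j) i := by
          refine Finset.mem_sdiff.mpr ⟨?_, hkR⟩
          have hk' : k ∈ inNbrs E i := by
            rw [Finset.mem_sdiff, Finset.mem_sdiff] at hkK
            exact hkK.1.1
          exact Finset.mem_insert_of_mem hk'
        have hni := hdropM j hj i hi ⟨k, hkS, hKval k hkK⟩
        have hlt2 : (XM (j+1)).card < (XM j).card :=
          Finset.card_lt_card ((Finset.ssubset_iff_of_subset (hsubM j hj)).mpr ⟨i, hiX, hni⟩)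
        omega
      · obtain ⟨i, hiX, hcard⟩ := hr
        have hiN : i ∈ N := ((hXmmem j i).mp hiX).1
        have hi : i ∉ A := (hNiff i).mp hiN
        obtain ⟨Ra, Rb, hR, hRa, hRacase, hRb, hRbcase⟩ := (hupd (T + j) i hi).1
        have hRacard : Ra.card ≤ F := by
          rcases hRacase with ⟨_, h⟩ | ⟨h, _⟩
          · exact h
          · exact le_of_eq h
        have hKcard : F + 1 ≤ ((inNbrs E i \ Xm j) \ A).card := by
          have e1 := Finset.card_sdiff_add_card_inter (inNbrs E i \ Xm j) A
          have e2 : ((inNbrs E i \ Xm j) ∩ A).card ≤ (inNbrs E i ∩ A).card :=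
            Finset.card_le_card (Finset.inter_subset_inter Finset.sdiff_subset Finset.Subset.rfl)
          have e3 := hA i hi
          omega
        have hKval : ∀ k ∈ (inNbrs E i \ Xm j) \ A, Am + εs j ≤ x (T + j) k := by
          intro k hk
          rw [Finset.mem_sdiff, Finset.mem_sdiff] at hk
          obtain ⟨⟨hk1, hk2⟩, hk3⟩ := hk
          have hkN : k ∈ N := (hNiff k).mpr hk3
          by_contra h
          push_neg at h
          exact hk2 ((hXmmem j k).mpr ⟨hkN, h⟩)
        have hKRb : ∀ k ∈ (inNbrs E i \ Xm j) \ A, k ∉ Rb := by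
          intro k hk hkRb
          have h1 := (Finset.mem_filter.mp (hRb hkRb)).2
          have h2 := hKval k hk
          have hxi : x (T + j) i < Am + εs j := ((hXmmem j i).mp hiX).2
          linarith
        have hKkept : ∃ k ∈ (inNbrs E i \ Xm j) \ A, k ∉ R (T + j) i := by
          by_contra h
          push_neg at h
          have hsub : (inNbrs E i \ Xm j) \ A ⊆ Ra := by
            intro k hk
            have hh := h k hk
            rw [hR] at hh
            rcases Finset.mem_union.mp hh with h1 | h1
            · exact h1
            · exact absurd h1 (hKRb k hk)
          have := Finset.card_le_card hsub
          omega
        obtain ⟨k, hkK, hkR⟩ := hKkept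
        have hkS : k ∈ (insert i (inNbrs E i)) \ R (T + j) i := by
          refine Finset.mem_sdiff.mpr ⟨?_, hkR⟩
          have hk' : k ∈ inNbrs E i := by
            rw [Finset.mem_sdiff, Finset.mem_sdiff] at hkK
            exact hkK.1.1
          exact Finset.mem_insert_of_mem hk'
        have hni := hdropm j hj i hi ⟨k, hkS, hKval k hkK⟩
        have hlt2 : (Xm (j+1)).card < (Xm j).card :=
          Finset.card_lt_card ((Finset.ssubset_iff_of_subset (hsubm j hj)).mpr ⟨i, hiX, hni⟩)
        omega
    have hcount : ∀ j : ℕ, j ≤ n → (XM j).Nonempty → (Xm j).Nonempty →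
        (XM j).card + (Xm j).card + j ≤ n := by
      intro j
      induction j with
      | zero =>
        intro _ hne1 hne2
        have h1 := Finset.card_union_of_disjoint (hdisj 0)
        have h2 : (XM 0 ∪ Xm 0).card ≤ n := by
          rw [hndef]
          exact Finset.card_le_univ _
        omega
      | succ j ih =>
        intro hj hne1 hne2
        have hj' : j ≤ n := Nat.le_of_succ_le hj
        have hne1' : (XM j).Nonempty := hne1.mono (hsubM j hj')
        have hne2' : (Xm j).Nonempty := hne2.mono (hsubm j hj')
        have h1 := ih hj' hne1' hne2'
        have h2 := hstrict j hj' hne1' hne2'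
        omega
    by_cases h1 : (XM n).Nonempty
    · by_cases h2 : (Xm n).Nonempty
      · have hc := hcount n le_rfl h1 h2
        have hc1 := Finset.card_pos.mpr h1
        have hc2 := Finset.card_pos.mpr h2
        omega
      · have hall : ∀ i ∈ N, Am + εs n ≤ x (T + n) i := by
          intro i hiN
          by_contra h
          push_neg at h
          exact h2 ⟨i, (hXmmem n i).mpr ⟨hiN, h⟩⟩
        have hle : Am + εs n ≤ m (T + n) := Finset.le_inf' hN _ hall
        have h3 := hAmge (T + n)
        have h4 := hεge n le_rfl
        linarith
    · have hall : ∀ i ∈ N, x (T + n) i ≤ AM - εs n := by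
        intro i hiN
        by_contra h
        push_neg at h
        exact h1 ⟨i, (hXMmem n i).mpr ⟨hiN, h⟩⟩
      have hle : M (T + n) ≤ AM - εs n := Finset.sup'_le hN _ hall
      have h3 := hAMle (T + n)
      have h4 := hεge n le_rfl
      linarith
  refine ⟨AM, ?_, ?_⟩
  · intro i hi
    have hmtend' : Filter.Tendsto m Filter.atTop (nhds AM) := hEq ▸ hmtend
    exact tendsto_of_tendsto_of_tendsto_of_le_of_le hmtend' hMtend
      (fun t => hxm t i hi) (fun t => hxM t i hi)
  · intro t i hi
    refine Set.mem_Icc.mpr ⟨?_, ?_⟩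
    · exact le_trans (hmmono (Nat.zero_le t)) (hxm t i hi)
    · exact le_trans (hxM t i hi) (hManti (Nat.zero_le t))
end

section
/- Consider a time-invariant digraph D = (V, E) on n ≥ 2 nodes that is NOT (F+1)-robust. Then there exist two nonempty disjoint subsets S1, S2 ⊆ V, neither of which is (F+1)-reachable, such that with no adversary nodes at all (A = ∅, which is F-locally bounded) and initial values a on S1, b on S2 with a < b, and values in (a,b) elsewhere, every node of S1 keeps the value a and every node of S2 keeps the value b for all time under discrete-time ARC-P with parameter F (for any valid weight sequences); hence (F+1)-robustness of the network is necessary for resilient asymptotic consensus under the F-local malicious model. -/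
lemma avg_mem_Icc {V : Type*} [DecidableEq V] {s : Finset V} {w x : V → ℝ} {a b : ℝ}
    (hw : ∀ j ∈ s, 0 ≤ w j) (hs : (∑ j ∈ s, w j) = 1)
    (hx : ∀ j ∈ s, x j ∈ Set.Icc a b) :
    (∑ j ∈ s, w j * x j) ∈ Set.Icc a b := by
  constructor
  · calc a = ∑ j ∈ s, w j * a := by rw [← Finset.sum_mul, hs, one_mul]
    _ ≤ ∑ j ∈ s, w j * x j := by
        apply Finset.sum_le_sum
        intro j hj
        exact mul_le_mul_of_nonneg_left (hx j hj).1 (hw j hj)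
  · calc (∑ j ∈ s, w j * x j) ≤ ∑ j ∈ s, w j * b :=
          Finset.sum_le_sum fun j hj => mul_le_mul_of_nonneg_left (hx j hj).2 (hw j hj)
    _ = b := by rw [← Finset.sum_mul, hs, one_mul]

lemma keep_min {V : Type*} [DecidableEq V] {Vi : Finset V} {xt : V → ℝ} {i : V} {F : ℕ}
    {R : Finset V} {a : ℝ}
    (hxi : xt i = a) (hge : ∀ j, a ≤ xt j)
    (hcard : (Vi.filter (fun j => xt i < xt j)).card ≤ F)
    (hR : ValidRemoved Vi xt i F R) :
    ∀ j ∈ (insert i Vi) \ R, xt j = a := by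
  obtain ⟨Ra, Rb, hRu, hRa, hRa2, hRb, hRb2⟩ := hR
  have hRaeq : Ra = Vi.filter (fun j => xt i < xt j) := by
    rcases hRa2 with ⟨h, _⟩ | ⟨h, _⟩
    · exact h
    · exact Finset.eq_of_subset_of_card_le hRa (h ▸ hcard)
  intro j hj
  rw [Finset.mem_sdiff, Finset.mem_insert] at hj
  obtain ⟨hj1 | hj1, hj2⟩ := hj
  · rw [hj1, hxi]
  · refine le_antisymm ?_ (hge j)
    by_contra h
    push_neg at h
    exact hj2 (hRu ▸ Finset.mem_union_left _ (hRaeq ▸ Finset.mem_filter.2 ⟨hj1, hxi ▸ h⟩))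

lemma keep_max {V : Type*} [DecidableEq V] {Vi : Finset V} {xt : V → ℝ} {i : V} {F : ℕ}
    {R : Finset V} {b : ℝ}
    (hxi : xt i = b) (hle : ∀ j, xt j ≤ b)
    (hcard : (Vi.filter (fun j => xt j < xt i)).card ≤ F)
    (hR : ValidRemoved Vi xt i F R) :
    ∀ j ∈ (insert i Vi) \ R, xt j = b := by
  obtain ⟨Ra, Rb, hRu, hRa, hRa2, hRb, hRb2⟩ := hR
  have hRbeq : Rb = Vi.filter (fun j => xt j < xt i) := by
    rcases hRb2 with ⟨h, _⟩ | ⟨h, _⟩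
    · exact h
    · exact Finset.eq_of_subset_of_card_le hRb (h ▸ hcard)
  intro j hj
  rw [Finset.mem_sdiff, Finset.mem_insert] at hj
  obtain ⟨hj1 | hj1, hj2⟩ := hj
  · rw [hj1, hxi]
  · refine le_antisymm (hle j) ?_
    by_contra h
    push_neg at h
    exact hj2 (hRu ▸ Finset.mem_union_right _ (hRbeq ▸ Finset.mem_filter.2 ⟨hj1, hxi ▸ h⟩))

/-- Necessity of `(F+1)`-robustness under the `F`-local malicious model: if a
time-invariant digraph on `n ≥ 2` nodes is not `(F+1)`-robust, then there are nonempty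
disjoint sets `S1`, `S2`, neither of which is `(F+1)`-reachable, such that with no
adversaries at all (an `F`-locally bounded adversary set) and initial values `a` on
`S1`, `b` on `S2` (`a < b`) and in `(a,b)` elsewhere, under ARC-P with parameter `F`
every node of `S1` keeps the value `a` and every node of `S2` keeps the value `b`
forever. -/
theorem stmt14 {V : Type*} [Fintype V] [DecidableEq V]
    (hn : 2 ≤ Fintype.card V)
    (E : Finset (V × V)) (hsimple : ∀ i : V, (i, i) ∉ E)
    (F : ℕ) (α : ℝ) (hα0 : 0 < α) (hα1 : α < 1)
    (hnrob : ¬ rRobust E (F + 1)) :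
    ∃ S1 S2 : Finset V, S1.Nonempty ∧ S2.Nonempty ∧ Disjoint S1 S2 ∧
      ¬ rReachable E (F + 1) S1 ∧ ¬ rReachable E (F + 1) S2 ∧
      ∀ a b : ℝ, a < b →
        ∀ (x : ℕ → V → ℝ) (R : ℕ → V → Finset V) (w : ℕ → V → V → ℝ),
          (∀ i ∈ S1, x 0 i = a) →
          (∀ i ∈ S2, x 0 i = b) →
          (∀ i ∈ Finset.univ \ (S1 ∪ S2), x 0 i ∈ Set.Ioo a b) →
          (∀ t : ℕ, ∀ i : V, ArcpUpdate E F α x R w i t) →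
          (∀ i ∈ S1, ∀ t : ℕ, x t i = a) ∧ (∀ j ∈ S2, ∀ t : ℕ, x t j = b) := by
  unfold rRobust at hnrob
  push_neg at hnrob
  obtain ⟨S1, S2, hne1, hne2, hdisj, hnr1, hnr2⟩ := hnrob
  refine ⟨S1, S2, hne1, hne2, hdisj, hnr1, hnr2, ?_⟩
  intro a b hab x R w h1 h2 h3 hupd
  have hF1 : ∀ i ∈ S1, ((inNbrs E i) \ S1).card ≤ F := by
    intro i hi
    by_contra h
    exact hnr1 ⟨i, hi, by omega⟩
  have hF2 : ∀ i ∈ S2, ((inNbrs E i) \ S2).card ≤ F := by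
    intro i hi
    by_contra h
    exact hnr2 ⟨i, hi, by omega⟩
  have key : ∀ t : ℕ, (∀ i ∈ S1, x t i = a) ∧ (∀ i ∈ S2, x t i = b) ∧
      (∀ i : V, x t i ∈ Set.Icc a b) := by
    intro t
    induction t with
    | zero =>
      refine ⟨h1, h2, fun i => ?_⟩
      by_cases hi1 : i ∈ S1
      · rw [h1 i hi1]; exact ⟨le_refl a, hab.le⟩
      by_cases hi2 : i ∈ S2
      · rw [h2 i hi2]; exact ⟨hab.le, le_refl b⟩
      · have := h3 i (Finset.mem_sdiff.2 ⟨Finset.mem_univ i,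
          by simp [hi1, hi2]⟩)
        exact ⟨this.1.le, this.2.le⟩
    | succ t ih =>
      obtain ⟨iha, ihb, ihIcc⟩ := ih
      have hwpos : ∀ i : V, ∀ j ∈ (insert i (inNbrs E i)) \ R t i, 0 ≤ w t i j := by
        intro i j hj
        exact le_trans hα0.le ((hupd t i).2.1 j hj)
      refine ⟨?_, ?_, ?_⟩
      · intro i hi
        obtain ⟨hvalid, hw, hsum, heq⟩ := hupd t i
        have hxi : x t i = a := iha i hi
        have hc : ((inNbrs E i).filter (fun j => x t i < x t j)).card ≤ F := by
          refine le_trans (Finset.card_le_card ?_) (hF1 i hi)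
          intro j hj
          rw [Finset.mem_filter] at hj
          rw [Finset.mem_sdiff]
          refine ⟨hj.1, fun hjS : j ∈ S1 => ?_⟩
          rw [iha j hjS, hxi] at hj
          exact lt_irrefl a hj.2
        have hall := keep_min hxi (fun j => (ihIcc j).1) hc hvalid
        rw [heq]
        calc ∑ j ∈ (insert i (inNbrs E i)) \ R t i, w t i j * x t j
            = ∑ j ∈ (insert i (inNbrs E i)) \ R t i, w t i j * a := by
              apply Finset.sum_congr rfl
              intro j hj
              rw [hall j hj]
          _ = a := by rw [← Finset.sum_mul, hsum, one_mul]
      · intro i hi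
        obtain ⟨hvalid, hw, hsum, heq⟩ := hupd t i
        have hxi : x t i = b := ihb i hi
        have hc : ((inNbrs E i).filter (fun j => x t j < x t i)).card ≤ F := by
          refine le_trans (Finset.card_le_card ?_) (hF2 i hi)
          intro j hj
          rw [Finset.mem_filter] at hj
          rw [Finset.mem_sdiff]
          refine ⟨hj.1, fun hjS : j ∈ S2 => ?_⟩
          rw [ihb j hjS, hxi] at hj
          exact lt_irrefl b hj.2
        have hall := keep_max hxi (fun j => (ihIcc j).2) hc hvalid
        rw [heq]
        calc ∑ j ∈ (insert i (inNbrs E i)) \ R t i, w t i j * x t j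
            = ∑ j ∈ (insert i (inNbrs E i)) \ R t i, w t i j * b := by
              apply Finset.sum_congr rfl
              intro j hj
              rw [hall j hj]
          _ = b := by rw [← Finset.sum_mul, hsum, one_mul]
      · intro i
        obtain ⟨hvalid, hw, hsum, heq⟩ := hupd t i
        rw [heq]
        exact avg_mem_Icc (hwpos i) hsum (fun j _ => ihIcc j)
  exact ⟨fun i hi t => (key t).1 i hi, fun j hj t => (key t).2.1 j hj⟩
end
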